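/- arXiv:1812.10669 — 7 statements merged into one kernel-verified Lean document; each statement's English description precedes it below -/
import Mathlib

section
/- Let X be a real Banach space. Then X is fully Mazur if and only if S₁(Y) = X* for every norming and norm-closed subspace Y ⊆ X*, i.e., if and only if every element of X* is the weak-star limit of some sequence contained in Y, for every norming and norm-closed subspace Y ⊆ X*. -/
open Filter Topology

noncomputable section

variable (X : Type*) [NormedAddCommGroup X] [NormedSpace ℝ X]

/-- The dual norm of an element of the weak-star dual. -/
def dnorm (y : WeakDual ℝ X) : ℝ := ‖WeakDual.toStrongDual y‖

/-- A subspace `Y ⊆ X*` is norming if there is `c > 0` with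
`c·‖x‖ ≤ sup {y x : y ∈ Y, ‖y‖ ≤ 1}` for every `x ∈ X`. -/
def IsNorming (Y : Submodule ℝ (WeakDual ℝ X)) : Prop :=
  ∃ c > 0, ∀ x : X, c * ‖x‖ ≤ sSup {r : ℝ | ∃ y ∈ Y, dnorm X y ≤ 1 ∧ r = y x}

/-- `Y` is closed for the dual norm topology of `X*`. -/
def NormClosed (Y : Submodule ℝ (WeakDual ℝ X)) : Prop :=
  IsClosed ((fun y => WeakDual.toStrongDual y) '' (Y : Set (WeakDual ℝ X)))

/-- A linear functional on `Y ⊆ X*` is weak-star sequentially continuous. -/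
def WStarSeqCont {Y : Submodule ℝ (WeakDual ℝ X)} (f : Y →ₗ[ℝ] ℝ) : Prop :=
  ∀ (u : ℕ → Y) (y : Y),
    Tendsto (fun n => (u n : WeakDual ℝ X)) atTop (𝓝 (y : WeakDual ℝ X)) →
      Tendsto (fun n => f (u n)) atTop (𝓝 (f y))

/-- `(Y, w*)` has the Mazur property: every weak-star sequentially continuous
linear functional on `Y` is weak-star continuous. -/
def MazurProp (Y : Submodule ℝ (WeakDual ℝ X)) : Prop :=
  ∀ f : Y →ₗ[ℝ] ℝ, WStarSeqCont X f → Continuous f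

/-- `X` is fully Mazur. -/
def FullyMazur : Prop :=
  ∀ Y : Submodule ℝ (WeakDual ℝ X), IsNorming X Y → NormClosed X Y → MazurProp X Y

/-- The Grothendieck condition on a linear functional `f : Y → ℝ`: the restriction of `f`
to every absolutely convex weak-star compact subset of `Y` is weak-star continuous. -/
def GrothendieckCond {Y : Submodule ℝ (WeakDual ℝ X)} (f : Y →ₗ[ℝ] ℝ) : Prop :=
  ∀ K : Set (WeakDual ℝ X), K ⊆ (Y : Set (WeakDual ℝ X)) → Convex ℝ K → Balanced ℝ K →
    IsCompact K → ContinuousOn (fun y : Y => f y) (Subtype.val ⁻¹' K)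

/-- Completeness of the Mackey space `(X, μ(X,Y))`, via Grothendieck's criterion. -/
def MackeyComplete (Y : Submodule ℝ (WeakDual ℝ X)) : Prop :=
  ∀ f : Y →ₗ[ℝ] ℝ, GrothendieckCond X f → Continuous f

/-- `X` is fully Mackey complete. -/
def FullyMackeyComplete : Prop :=
  ∀ Y : Submodule ℝ (WeakDual ℝ X), IsNorming X Y → NormClosed X Y → MackeyComplete X Y

/-- `S₁(A)`: the set of weak-star limits of sequences contained in `A`. -/
def S1 (A : Set (WeakDual ℝ X)) : Set (WeakDual ℝ X) :=
  {z | ∃ u : ℕ → WeakDual ℝ X, (∀ n, u n ∈ A) ∧ Tendsto u atTop (𝓝 z)}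

end

/-!
If `z ∉ S₁(Y)`, the coefficient of `z` on `Y ⊕ ℝz` is weak-star sequentially continuous: along a
subsequence with unbounded coefficients `z` would lie in `S₁(Y)`, and along a subsequence with
convergent coefficients the limit is forced, since `S₁(Y)` is a subspace. As `Y ⊕ ℝz` is again
norming and norm closed, the Mazur property makes this coefficient weak-star continuous, i.e. an
evaluation at some `x ∈ X`; it vanishes on the norming space `Y`, so `x = 0`, although the
coefficient of `z` is `1`.

Conversely, a weak-star sequentially continuous `f` on `Y` is norm continuous. If it is not an
evaluation, it lies at positive distance from the image of `X` in `Y*`, which is closed because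
`Y` is norming and `X` is complete; by Hahn–Banach this makes `ker f` norming, and it is norm
closed. So every element of `Y` is a weak-star limit of a sequence in `ker f`, and sequential
continuity gives `f = 0`, an evaluation after all.
-/

namespace Submodule

variable {K E : Type*} [Field K] [AddCommGroup E] [Module K E] (M : Submodule K E) {z : E}

noncomputable def coeffSpanSingleton (hz : z ∉ M) : ↥(M ⊔ K ∙ z) →ₗ[K] K :=
  (LinearPMap.supSpanSingleton ⟨M, 0⟩ z 1 hz).toFun

variable {M}

theorem coeffSpanSingleton_eq_iff (hz : z ∉ M) (w : ↥(M ⊔ K ∙ z)) (t : K) :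
    M.coeffSpanSingleton hz w = t ↔ (w : E) - t • z ∈ M := by
  obtain ⟨w, hw⟩ := w
  obtain ⟨y, hy, s, hs, rfl⟩ := mem_sup.mp hw
  obtain ⟨c, rfl⟩ := mem_span_singleton.mp hs
  have hcoeff : M.coeffSpanSingleton hz ⟨y + c • z, hw⟩ = c :=
    (LinearPMap.supSpanSingleton_apply_mk (⟨M, 0⟩ : E →ₗ.[K] K) z 1 hz y hy c).trans (by simp)
  have hsub : y + c • z - t • z = y + (c - t) • z := by rw [sub_smul]; abel
  rw [hcoeff, hsub, M.add_mem_iff_right hy, ← sub_eq_zero]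
  constructor
  · intro h; rw [h, zero_smul]; exact M.zero_mem
  · intro h; by_contra hc; exact hz ((M.smul_mem_iff hc).mp h)

theorem coeffSpanSingleton_sub_smul_mem (hz : z ∉ M) (w : ↥(M ⊔ K ∙ z)) :
    (w : E) - M.coeffSpanSingleton hz w • z ∈ M :=
  (coeffSpanSingleton_eq_iff hz w _).mp rfl

end Submodule

section NormedSpace

variable {E : Type*} [NormedAddCommGroup E] [NormedSpace ℝ E]

theorem abs_mul_infDist_le_norm_sub_smul {M : Submodule ℝ E} {y : E} (hy : y ∈ M) (z : E)
    (s : ℝ) : |s| * Metric.infDist z M ≤ ‖y - s • z‖ := by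
  rcases eq_or_ne s 0 with rfl | hs
  · simp
  have hdist : ‖y - s • z‖ = |s| * dist z (s⁻¹ • y) := by
    rw [dist_eq_norm, ← Real.norm_eq_abs, ← norm_smul, smul_sub, smul_smul, mul_inv_cancel₀ hs,
      one_smul, ← norm_neg, neg_sub]
  rw [hdist]
  gcongr
  exact Metric.infDist_le_dist_of_mem (M.smul_mem _ hy)

theorem exists_pos_mul_norm_le_norm_sub_smul {M : Submodule ℝ E} (hM : IsClosed (M : Set E))
    {z : E} (hz : z ∉ M) : ∃ m > 0, ∀ y ∈ M, ∀ s : ℝ, m * ‖y‖ ≤ ‖y - s • z‖ := by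
  set δ := Metric.infDist z M
  have hδ : 0 < δ := (hM.notMem_iff_infDist_pos ⟨0, M.zero_mem⟩).mp hz
  refine ⟨δ / (δ + ‖z‖), by positivity, fun y hy s => ?_⟩
  have hs := abs_mul_infDist_le_norm_sub_smul hy z s
  have hy : ‖y‖ ≤ ‖y - s • z‖ + |s| * ‖z‖ := by
    simpa [norm_smul] using norm_le_norm_sub_add y (s • z)
  rw [div_mul_eq_mul_div, div_le_iff₀ (by positivity)]
  nlinarith [norm_nonneg z, norm_nonneg (y - s • z)]

theorem exists_norm_sub_smul_le_norm_comp_ker {φ : StrongDual ℝ E} (hφ : φ ≠ 0)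
    (ξ : StrongDual ℝ E) : ∃ s : ℝ, ‖ξ - s • φ‖ ≤ ‖ξ.comp φ.ker.subtypeL‖ := by
  obtain ⟨v₀, hv₀⟩ : ∃ v₀, φ v₀ = 1 := by
    obtain ⟨v, hv⟩ := DFunLike.ne_iff.mp hφ
    exact ⟨(φ v)⁻¹ • v, by simpa using inv_mul_cancel₀ hv⟩
  obtain ⟨η, hηξ, hη⟩ := exists_extension_norm_eq φ.ker (ξ.comp φ.ker.subtypeL)
  -- `ξ - η` vanishes on `ker φ`, so it is the multiple `(ξ - η) v₀ • φ` of `φ`.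
  refine ⟨(ξ - η) v₀, le_of_eq (hη ▸ congrArg norm (ContinuousLinearMap.ext fun v => ?_))⟩
  have hker : v - φ v • v₀ ∈ φ.ker := by simp [hv₀]
  have := hηξ ⟨_, hker⟩
  simp only [map_sub, map_smul, ContinuousLinearMap.comp_apply, Submodule.subtypeL_apply,
    smul_eq_mul] at this
  simp only [sub_apply, smul_apply, smul_eq_mul]
  linarith

theorem exists_pos_mul_norm_le_norm_comp_ker {X : Type*} [NormedAddCommGroup X] [NormedSpace ℝ X]
    [CompleteSpace X] {T : X →L[ℝ] StrongDual ℝ E} {c : ℝ} (hc : 0 < c)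
    (hT : ∀ x, c * ‖x‖ ≤ ‖T x‖) {φ : StrongDual ℝ E} (hφ : φ ∉ Set.range T) :
    ∃ c' > 0, ∀ x, c' * ‖x‖ ≤ ‖(T x).comp φ.ker.subtypeL‖ := by
  have hanti : AntilipschitzWith ⟨c⁻¹, by positivity⟩ T := by
    refine T.antilipschitz_of_bound fun x => ?_
    change ‖x‖ ≤ c⁻¹ * ‖T x‖
    rw [inv_mul_eq_div, le_div_iff₀ hc, mul_comm]
    exact hT x
  obtain ⟨m, hm, hbound⟩ := exists_pos_mul_norm_le_norm_sub_smul (M := T.range)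
    (hanti.isClosed_range T.uniformContinuous) hφ
  have hφ0 : φ ≠ 0 := fun h => hφ ⟨0, by rw [map_zero, h]⟩
  refine ⟨m * c, by positivity, fun x => ?_⟩
  obtain ⟨s, hs⟩ := exists_norm_sub_smul_le_norm_comp_ker hφ0 (T x)
  calc m * c * ‖x‖ ≤ m * ‖T x‖ := by rw [mul_assoc]; gcongr; exact hT x
    _ ≤ ‖T x - s • φ‖ := hbound _ (LinearMap.mem_range_self _ x) s
    _ ≤ ‖(T x).comp φ.ker.subtypeL‖ := hs

end NormedSpace

section WeakStarDual

variable {X : Type*} [NormedAddCommGroup X] [NormedSpace ℝ X]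

theorem exists_eq_eval_of_continuous {Y : Submodule ℝ (WeakDual ℝ X)} (f : Y →ₗ[ℝ] ℝ)
    (hf : Continuous f) : ∃ x : X, ∀ w : Y, f w = (w : WeakDual ℝ X) x := by
  let B : Y →ₗ[ℝ] X →ₗ[ℝ] ℝ := (topDualPairing ℝ X).comp Y.subtype
  have hB : Continuous fun w : WeakBilin B => f w :=
    hf.comp (continuous_induced_rng.2 (continuous_induced_rng.2 (WeakBilin.coeFn_continuous B)))
  obtain ⟨x, hx⟩ := LinearMap.dualEmbedding_surjective B ⟨f, hB⟩
  exact ⟨x, fun w => (DFunLike.congr_fun hx w).symm⟩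

def S1Submodule (Y : Submodule ℝ (WeakDual ℝ X)) : Submodule ℝ (WeakDual ℝ X) where
  carrier := S1 X Y
  zero_mem' := ⟨0, fun _ => Y.zero_mem, tendsto_const_nhds⟩
  add_mem' := fun ⟨u, hu, hlim⟩ ⟨v, hv, hlim'⟩ =>
    ⟨u + v, fun n => Y.add_mem (hu n) (hv n), hlim.add hlim'⟩
  smul_mem' := fun c _ ⟨u, hu, hlim⟩ => ⟨c • u, fun n => Y.smul_mem c (hu n), hlim.const_smul c⟩

theorem subset_S1 (A : Set (WeakDual ℝ X)) : A ⊆ S1 X A :=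
  fun z hz => ⟨fun _ => z, fun _ => hz, tendsto_const_nhds⟩

section Norming

/-- The module instance is pinned to the normed one: with the default instance,
`StrongDual ℝ Y.toStrongDual` would not find its operator norm. -/
def Submodule.toStrongDual (Y : Submodule ℝ (WeakDual ℝ X)) :
    @Submodule ℝ (StrongDual ℝ X) _ _ NormedSpace.toModule where
  carrier := {g | StrongDual.toWeakDual g ∈ Y}
  add_mem' := Y.add_mem
  zero_mem' := Y.zero_mem
  smul_mem' c _ := Y.smul_mem c

theorem sSup_eval_eq_norm_flip_subtypeL (Y : Submodule ℝ (WeakDual ℝ X)) (x : X) :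
    sSup {r : ℝ | ∃ y ∈ Y, dnorm X y ≤ 1 ∧ r = y x} = ‖Y.toStrongDual.subtypeL.flip x‖ := by
  set A := {r : ℝ | ∃ y ∈ Y, dnorm X y ≤ 1 ∧ r = y x}
  set J := Y.toStrongDual.subtypeL.flip
  have hA : ∀ r ∈ A, r ≤ ‖J x‖ := by
    rintro _ ⟨y, hy, hy1, rfl⟩
    calc y x ≤ ‖J x ⟨WeakDual.toStrongDual y, hy⟩‖ := le_abs_self _
      _ ≤ ‖J x‖ := (J x).unit_le_opNorm _ hy1
  have hball : (fun v => ‖J x v‖) '' Metric.closedBall 0 1 ⊆ A := by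
    rintro _ ⟨⟨y, hy⟩, hv, rfl⟩
    rw [mem_closedBall_zero_iff] at hv
    rcases abs_cases (y x) with ⟨h, -⟩ | ⟨h, -⟩
    · exact ⟨_, hy, hv, h⟩
    · exact ⟨_, Y.neg_mem hy, (norm_neg y).trans_le hv, h⟩
  refine le_antisymm (csSup_le ⟨0, 0, Y.zero_mem, by simp [dnorm], rfl⟩ hA) ?_
  calc ‖J x‖ = sSup ((fun v => ‖J x v‖) '' Metric.closedBall 0 1) :=
        (J x).sSup_unitClosedBall_eq_norm.symm
    _ ≤ sSup A :=
        csSup_le_csSup ⟨_, hA⟩ ((Metric.nonempty_closedBall.mpr zero_le_one).image _) hball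

theorem isNorming_iff (Y : Submodule ℝ (WeakDual ℝ X)) :
    IsNorming X Y ↔ ∃ c > 0, ∀ x : X, c * ‖x‖ ≤ ‖Y.toStrongDual.subtypeL.flip x‖ := by
  simp only [IsNorming, sSup_eval_eq_norm_flip_subtypeL]

theorem normClosed_iff (Y : Submodule ℝ (WeakDual ℝ X)) :
    NormClosed X Y ↔ IsClosed (Y.toStrongDual : Set (StrongDual ℝ X)) := by
  rw [NormClosed]
  congr!
  ext g
  exact ⟨by rintro ⟨y, hy, rfl⟩; exact hy, fun hg => ⟨_, hg, rfl⟩⟩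

theorem IsNorming.mono {Y Y' : Submodule ℝ (WeakDual ℝ X)} (hY : IsNorming X Y) (h : Y ≤ Y') :
    IsNorming X Y' := by
  rw [isNorming_iff] at hY ⊢
  obtain ⟨c, hc, hY⟩ := hY
  refine ⟨c, hc, fun x => (hY x).trans ?_⟩
  exact (Y.toStrongDual.subtypeL.flip x).opNorm_le_bound (norm_nonneg _) fun v =>
    (Y'.toStrongDual.subtypeL.flip x).le_opNorm ⟨v, h v.2⟩

theorem IsNorming.eq_zero_of_forall_eval_eq_zero {Y : Submodule ℝ (WeakDual ℝ X)}
    (hY : IsNorming X Y) {x : X} (h : ∀ y ∈ Y, y x = 0) : x = 0 := by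
  rw [isNorming_iff] at hY
  obtain ⟨c, hc, hY⟩ := hY
  have hJ : Y.toStrongDual.subtypeL.flip x = 0 := ContinuousLinearMap.ext fun v => h _ v.2
  have := hY x
  rw [hJ, norm_zero] at this
  exact norm_le_zero_iff.mp (nonpos_of_mul_nonpos_right this hc)

theorem NormClosed.sup_span {Y : Submodule ℝ (WeakDual ℝ X)} (hY : NormClosed X Y)
    (z : WeakDual ℝ X) : NormClosed X (Y ⊔ ℝ ∙ z) := by
  let T := (WeakDual.toStrongDual : WeakDual ℝ X ≃ₗ[ℝ] StrongDual ℝ X).toLinearMap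
  have himage (W : Submodule ℝ (WeakDual ℝ X)) :
      (fun y => WeakDual.toStrongDual y) '' (W : Set (WeakDual ℝ X)) = W.map T :=
    (Submodule.map_coe T W).symm
  rw [NormClosed, himage] at hY ⊢
  rw [Submodule.map_sup]
  exact Submodule.isClosed_sup_finiteDimensional _ _ hY

end Norming

section Forward

variable {Y : Submodule ℝ (WeakDual ℝ X)} {z : WeakDual ℝ X} {u : ℕ → ↥(Y ⊔ ℝ ∙ z)}

theorem coeffSpanSingleton_eq_of_tendsto (hzY : z ∉ Y) (hz : z ∉ S1 X Y) {w : ↥(Y ⊔ ℝ ∙ z)}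
    (hu : Tendsto (fun n => (u n : WeakDual ℝ X)) atTop (𝓝 w)) {a : ℝ}
    (ha : Tendsto (fun n => Y.coeffSpanSingleton hzY (u n)) atTop (𝓝 a)) :
    Y.coeffSpanSingleton hzY w = a := by
  have hlim : (w : WeakDual ℝ X) - a • z ∈ S1Submodule Y :=
    ⟨_, fun n => Y.coeffSpanSingleton_sub_smul_mem hzY (u n), hu.sub (ha.smul_const z)⟩
  have hw : (w : WeakDual ℝ X) - Y.coeffSpanSingleton hzY w • z ∈ S1Submodule Y :=
    subset_S1 _ (Y.coeffSpanSingleton_sub_smul_mem hzY w)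
  have hdiff := (S1Submodule Y).sub_mem hlim hw
  rw [sub_sub_sub_cancel_left, ← sub_smul] at hdiff
  by_contra hne
  exact hz (((S1Submodule Y).smul_mem_iff (sub_ne_zero.mpr hne)).mp hdiff)

theorem mem_S1_of_tendsto_abs_coeffSpanSingleton (hzY : z ∉ Y) {w : WeakDual ℝ X}
    (hu : Tendsto (fun n => (u n : WeakDual ℝ X)) atTop (𝓝 w))
    (ht : Tendsto (fun n => |Y.coeffSpanSingleton hzY (u n)|) atTop atTop) : z ∈ S1 X Y := by
  set t := fun n => Y.coeffSpanSingleton hzY (u n)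
  have hinv : Tendsto (fun n => (t n)⁻¹) atTop (𝓝 0) :=
    (tendsto_zero_iff_abs_tendsto_zero _).mpr
      (ht.inv_tendsto_atTop.congr fun n => (abs_inv (t n)).symm)
  refine ⟨fun n => -(t n)⁻¹ • ((u n : WeakDual ℝ X) - t n • z),
    fun n => Y.smul_mem _ (Y.coeffSpanSingleton_sub_smul_mem hzY (u n)), ?_⟩
  have hlim : Tendsto (fun n => z - (t n)⁻¹ • (u n : WeakDual ℝ X)) atTop
      (𝓝 (z - (0 : ℝ) • w)) :=
    tendsto_const_nhds.sub (hinv.smul hu)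
  rw [zero_smul, sub_zero] at hlim
  refine hlim.congr' ?_
  filter_upwards [ht.eventually_gt_atTop 0] with n hn
  rw [smul_sub, smul_smul, neg_mul, inv_mul_cancel₀ (abs_pos.mp hn), neg_smul, neg_one_smul]
  abel

theorem wStarSeqCont_coeffSpanSingleton (hzY : z ∉ Y) (hz : z ∉ S1 X Y) :
    WStarSeqCont X (Y.coeffSpanSingleton hzY) := by
  intro u w hu
  refine tendsto_of_subseq_tendsto fun ns hns => ?_
  have hunb : ¬ Tendsto (fun n => |Y.coeffSpanSingleton hzY (u (ns n))|) atTop atTop :=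
    fun h => hz (mem_S1_of_tendsto_abs_coeffSpanSingleton hzY (hu.comp hns) h)
  simp only [tendsto_atTop, not_forall, not_eventually, not_le] at hunb
  obtain ⟨C, hC⟩ := hunb
  obtain ⟨a, -, φ, hφ, ha⟩ := tendsto_subseq_of_frequently_bounded (Metric.isBounded_Icc (-C) C)
    (hC.mono fun n hn => abs_le.mp hn.le)
  refine ⟨φ, ?_⟩
  rwa [coeffSpanSingleton_eq_of_tendsto hzY hz (hu.comp (hns.comp hφ.tendsto_atTop)) ha]

theorem S1_eq_univ_of_fullyMazur (hX : FullyMazur X) (hn : IsNorming X Y)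
    (hcl : NormClosed X Y) : S1 X Y = Set.univ := by
  refine Set.eq_univ_of_forall fun z => by_contra fun hz => ?_
  have hzY : z ∉ Y := fun h => hz (subset_S1 _ h)
  set f := Y.coeffSpanSingleton hzY
  obtain ⟨x, hx⟩ := exists_eq_eval_of_continuous f
    (hX _ (hn.mono le_sup_left) (hcl.sup_span z) f (wStarSeqCont_coeffSpanSingleton hzY hz))
  have hx0 : x = 0 := hn.eq_zero_of_forall_eval_eq_zero fun y hy => by
    rw [← hx ⟨y, Submodule.mem_sup_left hy⟩, Submodule.coeffSpanSingleton_eq_iff]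
    simpa using hy
  have hfz := hx ⟨z, Submodule.mem_sup_right (Submodule.mem_span_singleton_self z)⟩
  rw [hx0, map_zero, Submodule.coeffSpanSingleton_eq_iff] at hfz
  exact hzY (by simpa using hfz)

end Forward

section Backward

variable {Y : Submodule ℝ (WeakDual ℝ X)} {f : Y →ₗ[ℝ] ℝ}

theorem WStarSeqCont.eq_zero_of_S1_ker_eq_univ (hf : WStarSeqCont X f)
    (h : S1 X ((LinearMap.ker f).map Y.subtype) = Set.univ) : f = 0 := by
  ext w
  obtain ⟨u, hu, hlim⟩ := h.symm ▸ Set.mem_univ (w : WeakDual ℝ X)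
  choose k hk hku using fun n => Submodule.mem_map.mp (hu n)
  have h0 : Tendsto (fun n => f (k n)) atTop (𝓝 0) := by simp [LinearMap.mem_ker.mp (hk _)]
  exact tendsto_nhds_unique (hf k w (hlim.congr fun n => (hku n).symm)) h0

noncomputable def strongFunctional (f : Y →ₗ[ℝ] ℝ) : Y.toStrongDual →ₗ[ℝ] ℝ where
  toFun v := f ⟨StrongDual.toWeakDual v, v.2⟩
  map_add' _ _ := f.map_add _ _
  map_smul' _ _ := f.map_smul _ _

theorem WStarSeqCont.continuous_strongFunctional (hf : WStarSeqCont X f) :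
    Continuous (strongFunctional f) :=
  continuous_iff_seqContinuous.mpr fun _ _ hv =>
    hf _ _ ((NormedSpace.Dual.toWeakDual_continuous.tendsto _).comp
      ((continuous_subtype_val.tendsto _).comp hv))

theorem isNorming_map_ker [CompleteSpace X] (hY : IsNorming X Y) (hf : WStarSeqCont X f)
    (hrep : ¬∃ x : X, ∀ w : Y, f w = (w : WeakDual ℝ X) x) :
    IsNorming X ((LinearMap.ker f).map Y.subtype) := by
  rw [isNorming_iff] at hY ⊢
  obtain ⟨c, hc, hY⟩ := hY
  let φ : StrongDual ℝ Y.toStrongDual := ⟨strongFunctional f, hf.continuous_strongFunctional⟩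
  have hφ : φ ∉ Set.range Y.toStrongDual.subtypeL.flip := by
    rintro ⟨x, hx⟩
    exact hrep ⟨x, fun w => (DFunLike.congr_fun hx ⟨WeakDual.toStrongDual w, w.2⟩).symm⟩
  obtain ⟨c', hc', hker⟩ := exists_pos_mul_norm_le_norm_comp_ker hc hY hφ
  refine ⟨c', hc', fun x => (hker x).trans ?_⟩
  refine ContinuousLinearMap.opNorm_le_bound _ (norm_nonneg _) fun k => ?_
  exact (((LinearMap.ker f).map Y.subtype).toStrongDual.subtypeL.flip x).le_opNorm
    ⟨k, ⟨_, k.1.2⟩, k.2, rfl⟩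

theorem normClosed_map_ker (hY : NormClosed X Y) (hf : Continuous (strongFunctional f)) :
    NormClosed X ((LinearMap.ker f).map Y.subtype) := by
  rw [normClosed_iff] at hY ⊢
  have hker : (((LinearMap.ker f).map Y.subtype).toStrongDual : Set (StrongDual ℝ X)) =
      Subtype.val '' (strongFunctional f ⁻¹' {0}) := by
    ext g
    constructor
    · rintro ⟨⟨w, hwY⟩, hw, hwg⟩
      subst hwg
      exact ⟨⟨_, hwY⟩, hw, rfl⟩
    · rintro ⟨v, hv, rfl⟩
      exact ⟨⟨_, v.2⟩, hv, rfl⟩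
  rw [hker]
  exact hY.isClosedEmbedding_subtypeVal.isClosedMap _ (isClosed_singleton.preimage hf)

theorem fullyMazur_of_S1_eq_univ [CompleteSpace X]
    (hS : ∀ Y : Submodule ℝ (WeakDual ℝ X), IsNorming X Y → NormClosed X Y → S1 X Y = Set.univ) :
    FullyMazur X := by
  intro Y hn hcl f hf
  by_cases hrep : ∃ x : X, ∀ w : Y, f w = (w : WeakDual ℝ X) x
  · obtain ⟨x, hx⟩ := hrep
    rw [show ⇑f = fun w : Y => (w : WeakDual ℝ X) x from funext hx]
    exact (WeakDual.eval_continuous x).comp continuous_subtype_val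
  · have hf0 := hf.eq_zero_of_S1_ker_eq_univ (hS _ (isNorming_map_ker hn hf hrep)
      (normClosed_map_ker hcl hf.continuous_strongFunctional))
    exact absurd ⟨0, fun w => by simp [hf0]⟩ hrep

end Backward

end WeakStarDual

/-- A Banach space `X` is fully Mazur iff `S₁(Y) = X*` for every
norming and norm-closed subspace `Y ⊆ X*`. -/
theorem statement0 (X : Type*) [NormedAddCommGroup X] [NormedSpace ℝ X] [CompleteSpace X] :
    FullyMazur X ↔
      ∀ Y : Submodule ℝ (WeakDual ℝ X), IsNorming X Y → NormClosed X Y →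
        S1 X (Y : Set (WeakDual ℝ X)) = Set.univ :=
  ⟨fun hX _ hn hcl => S1_eq_univ_of_fullyMazur hX hn hcl, fullyMazur_of_S1_eq_univ⟩
end

section
/- Let X be a real Banach space, let Z ⊆ X* be a norming and norm-closed subspace, and let x* ∈ X* be such that x* is not the weak-star limit of any sequence contained in Z (i.e., x* ∉ S₁(Z)). Then x* ∉ Z, and the linear functional f on the subspace Y := Z ⊕ ℝx* defined by f(z* + λx*) := λ (for z* ∈ Z and λ ∈ ℝ) is w*-sequentially continuous but not w*-continuous; in particular (Y, w*) fails the Mazur property and X is not fully Mazur. -/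
open Filter Topology

/-! A norming subspace `Z` is weak-star dense: a weak-star continuous functional on `X*` is the
evaluation at some `x ∈ X` (Hahn–Banach), and `Z` annihilates no nonzero `x`. The coordinate
functional `f(z + λx*) = λ` vanishes on `Z` but not at `x*`, so it is not weak-star continuous.
It is sequentially continuous: if `z n + λ n • x* → 0` with `|λ n| ≥ ε` along a subsequence, then
`-(λ n)⁻¹ • z n ∈ Z` differs from `x*` by `(λ n)⁻¹ • (z n + λ n • x*) → 0`, so `x* ∈ S₁(Z)`.
Adding a line keeps `Z` norming and norm-closed, so `X` is not fully Mazur. -/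

section Coordinate

variable {R M : Type*} [Semiring R] [AddCommMonoid M] [Module R M]

theorem Submodule.exists_eq_add_smul_of_mem_sup_span_singleton {Z : Submodule R M} {x w : M}
    (hw : w ∈ Z ⊔ Submodule.span R {x}) : ∃ z ∈ Z, ∃ l : R, w = z + l • x := by
  obtain ⟨z, hz, v, hv, rfl⟩ := Submodule.mem_sup.mp hw
  obtain ⟨l, rfl⟩ := Submodule.mem_span_singleton.mp hv
  exact ⟨z, hz, l, rfl⟩

def IsCoordAlong (Z : Submodule R M) (x : M) (f : ↥(Z ⊔ Submodule.span R {x}) →ₗ[R] R) :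
    Prop :=
  ∀ (w : ↥(Z ⊔ Submodule.span R {x})) (z : M) (l : R), z ∈ Z → (w : M) = z + l • x → f w = l

theorem Submodule.mem_sup_span_singleton_self (Z : Submodule R M) (x : M) :
    x ∈ Z ⊔ Submodule.span R {x} :=
  Submodule.mem_sup_right (Submodule.mem_span_singleton_self x)

namespace IsCoordAlong

variable {Z : Submodule R M} {x : M} {f : ↥(Z ⊔ Submodule.span R {x}) →ₗ[R] R}

theorem apply_self (hf : IsCoordAlong Z x f) : f ⟨x, Z.mem_sup_span_singleton_self x⟩ = 1 :=
  hf _ 0 1 Z.zero_mem (by simp)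

theorem apply_eq_zero (hf : IsCoordAlong Z x f) {w : ↥(Z ⊔ Submodule.span R {x})}
    (hw : (w : M) ∈ Z) : f w = 0 :=
  hf w w 0 hw (by simp)

end IsCoordAlong

end Coordinate

section CoordinateOverField

variable {K V : Type*} [Field K] [AddCommGroup V] [Module K V] {Z : Submodule K V} {x : V}

theorem exists_isCoordAlong (hx : x ∉ Z) : ∃ f, IsCoordAlong Z x f := by
  set Y := Z ⊔ Submodule.span K {x}
  set xY : Y := ⟨x, Z.mem_sup_span_singleton_self x⟩
  obtain ⟨g, hgx, hgZ⟩ := (Z.comap Y.subtype).exists_dual_map_eq_bot_of_notMem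
    (x := xY) hx inferInstance
  refine ⟨(g xY)⁻¹ • g, fun w z l hz hw => ?_⟩
  have hwZ : w - l • xY ∈ Z.comap Y.subtype := by
    simpa [xY, hw] using hz
  have hg : g (w - l • xY) = 0 := LinearMap.le_ker_iff_map.mpr hgZ hwZ
  rw [map_sub, map_smul, smul_eq_mul, sub_eq_zero] at hg
  rw [LinearMap.smul_apply, hg, smul_eq_mul, mul_comm l, ← mul_assoc, inv_mul_cancel₀ hgx,
    one_mul]

theorem IsCoordAlong.not_continuous [TopologicalSpace K] [T2Space K] [TopologicalSpace V]
    {f : ↥(Z ⊔ Submodule.span K {x}) →ₗ[K] K} (hf : IsCoordAlong Z x f)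
    (hZ : Dense (Z : Set V)) : ¬ Continuous f := by
  intro hcont
  have hdense : Dense ((↑) ⁻¹' (Z : Set V) : Set ↥(Z ⊔ Submodule.span K {x})) := by
    refine Topology.IsInducing.subtypeVal.dense_iff.mpr fun w => closure_mono ?_ (hZ w)
    exact fun z hz => ⟨⟨z, Submodule.mem_sup_left hz⟩, hz, rfl⟩
  have hf0 : f = 0 := by
    have := hcont.ext_on hdense continuous_const fun w hw => hf.apply_eq_zero hw
    exact LinearMap.coe_injective this
  simpa [hf0] using hf.apply_self

end CoordinateOverField

theorem WeakBilin.exists_apply_ne_zero_of_notMem_closure {E F : Type*} [AddCommGroup E]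
    [Module ℝ E] [AddCommGroup F] [Module ℝ F] (B : E →ₗ[ℝ] F →ₗ[ℝ] ℝ)
    (Z : Submodule ℝ (WeakBilin B)) {y : WeakBilin B}
    (hy : y ∉ closure (Z : Set (WeakBilin B))) :
    ∃ x : F, (∀ z ∈ Z, B z x = 0) ∧ B y x ≠ 0 := by
  obtain ⟨φ, u, hφy, hφZ⟩ :=
    geometric_hahn_banach_point_closed Z.convex.closure isClosed_closure hy
  have hu : u < 0 := by simpa using hφZ 0 (subset_closure Z.zero_mem)
  have hφZ0 : ∀ z ∈ Z, φ z = 0 := by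
    intro z hz
    by_contra hzx
    have := hφZ ((u / φ z) • z) (subset_closure (Z.smul_mem _ hz))
    rw [map_smul, smul_eq_mul, div_mul_cancel₀ _ hzx] at this
    exact lt_irrefl u this
  obtain ⟨x, rfl⟩ := LinearMap.dualEmbedding_surjective B φ
  exact ⟨x, hφZ0, fun hyx => (hφy.trans hu).ne hyx⟩

section WeakStar

variable {X : Type*} [NormedAddCommGroup X] [NormedSpace ℝ X]

theorem IsNorming.eq_zero_of_forall_apply_eq_zero {Z : Submodule ℝ (WeakDual ℝ X)}
    (hZ : IsNorming X Z) {x : X} (hx : ∀ z ∈ Z, z x = 0) : x = 0 := by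
  obtain ⟨c, hc, hnorm⟩ := hZ
  have hvalues : {r : ℝ | ∃ y ∈ Z, dnorm X y ≤ 1 ∧ r = y x} = {0} := by
    refine Set.eq_singleton_iff_unique_mem.mpr ⟨⟨0, Z.zero_mem, by simp [dnorm], rfl⟩, ?_⟩
    rintro r ⟨y, hy, -, rfl⟩
    exact hx y hy
  have hcx := hnorm x
  rw [hvalues, csSup_singleton, ← mul_zero c] at hcx
  exact norm_le_zero_iff.mp (le_of_mul_le_mul_left hcx hc)

theorem IsNorming.mono_s1 {Z W : Submodule ℝ (WeakDual ℝ X)} (hZ : IsNorming X Z) (hZW : Z ≤ W) :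
    IsNorming X W := by
  obtain ⟨c, hc, h⟩ := hZ
  refine ⟨c, hc, fun x => (h x).trans (csSup_le_csSup ⟨‖x‖, ?_⟩
    ⟨0, 0, Z.zero_mem, by simp [dnorm], rfl⟩ ?_)⟩
  · rintro r ⟨y, -, hy, rfl⟩
    calc y x ≤ ‖WeakDual.toStrongDual y x‖ := le_abs_self _
      _ ≤ ‖WeakDual.toStrongDual y‖ * ‖x‖ := ContinuousLinearMap.le_opNorm _ _
      _ ≤ ‖x‖ := mul_le_of_le_one_left (norm_nonneg x) hy
  · rintro r ⟨y, hy, hy1, rfl⟩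
    exact ⟨y, hZW hy, hy1, rfl⟩

theorem IsNorming.dense {Z : Submodule ℝ (WeakDual ℝ X)} (hZ : IsNorming X Z) :
    Dense (Z : Set (WeakDual ℝ X)) := fun y => by
  by_contra hy
  obtain ⟨x, hxZ, hyx⟩ :=
    WeakBilin.exists_apply_ne_zero_of_notMem_closure (topDualPairing ℝ X) Z hy
  exact hyx (by rw [hZ.eq_zero_of_forall_apply_eq_zero hxZ, map_zero])

theorem NormClosed.sup_span_singleton {Z : Submodule ℝ (WeakDual ℝ X)} (hZ : NormClosed X Z)
    (y : WeakDual ℝ X) : NormClosed X (Z ⊔ Submodule.span ℝ {y}) := by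
  let e : WeakDual ℝ X ≃ₗ[ℝ] StrongDual ℝ X := WeakDual.toStrongDual
  have himage (W : Submodule ℝ (WeakDual ℝ X)) :
      (fun y => WeakDual.toStrongDual y) '' (W : Set (WeakDual ℝ X)) =
        (W.map e.toLinearMap : Set (StrongDual ℝ X)) := rfl
  unfold NormClosed at *
  rw [himage] at hZ ⊢
  rw [Submodule.map_sup, Submodule.map_span, Set.image_singleton]
  exact Submodule.isClosed_sup_finiteDimensional _ _ hZ

theorem WeakDual.tendsto_smul_zero_of_isBoundedUnder {α : Type*} {l : Filter α} {c : α → ℝ}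
    {w : α → WeakDual ℝ X} (hc : IsBoundedUnder (· ≤ ·) l fun a => ‖c a‖)
    (hw : Tendsto w l (𝓝 0)) : Tendsto (fun a => c a • w a) l (𝓝 0) := by
  rw [tendsto_iff_forall_eval_tendsto_topDualPairing] at hw ⊢
  intro x
  exact isBoundedUnder_le_mul_tendsto_zero hc (hw x)

theorem tendsto_zero_of_tendsto_add_smul {Z : Submodule ℝ (WeakDual ℝ X)} {y : WeakDual ℝ X}
    (hy : y ∉ S1 X (Z : Set (WeakDual ℝ X))) {z : ℕ → WeakDual ℝ X} {l : ℕ → ℝ}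
    (hz : ∀ n, z n ∈ Z) (h : Tendsto (fun n => z n + l n • y) atTop (𝓝 0)) :
    Tendsto l atTop (𝓝 0) := by
  by_contra hl
  obtain ⟨ε, hε, hfreq⟩ : ∃ ε > 0, ∃ᶠ n in atTop, ε ≤ |l n| := by
    simpa [Metric.tendsto_atTop, frequently_atTop, Real.dist_eq] using hl
  obtain ⟨φ, hφ, hφε⟩ := extraction_of_frequently_atTop hfreq
  have hne (k : ℕ) : l (φ k) ≠ 0 := abs_pos.mp (hε.trans_le (hφε k))
  have hbound : IsBoundedUnder (· ≤ ·) atTop fun k => ‖(l (φ k))⁻¹‖ :=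
    isBoundedUnder_of ⟨ε⁻¹, fun k => by
      rw [norm_inv, Real.norm_eq_abs]; exact inv_anti₀ hε (hφε k)⟩
  refine hy ⟨fun k => -(l (φ k))⁻¹ • z (φ k), fun k => Z.smul_mem _ (hz _), ?_⟩
  have hdiff (k : ℕ) : -(l (φ k))⁻¹ • z (φ k) =
      y - (l (φ k))⁻¹ • (z (φ k) + l (φ k) • y) := by
    rw [smul_add, smul_smul, inv_mul_cancel₀ (hne k), one_smul, neg_smul]
    abel
  simp_rw [hdiff]
  simpa using tendsto_const_nhds.sub
    (WeakDual.tendsto_smul_zero_of_isBoundedUnder hbound (h.comp hφ.tendsto_atTop))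

theorem IsCoordAlong.wStarSeqCont {Z : Submodule ℝ (WeakDual ℝ X)} {y : WeakDual ℝ X}
    {f : ↥(Z ⊔ Submodule.span ℝ {y}) →ₗ[ℝ] ℝ} (hf : IsCoordAlong Z y f)
    (hy : y ∉ S1 X (Z : Set (WeakDual ℝ X))) : WStarSeqCont X f := by
  intro u w hu
  choose z hz l hl using fun n =>
    Submodule.exists_eq_add_smul_of_mem_sup_span_singleton (u n - w).2
  have hfu (n : ℕ) : f (u n) = f w + l n := by
    rw [← hf _ _ _ (hz n) (hl n), map_sub, add_sub_cancel]
  have hl0 : Tendsto l atTop (𝓝 0) := by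
    refine tendsto_zero_of_tendsto_add_smul hy hz ?_
    simp_rw [← hl]
    simpa using hu.sub_const (w : WeakDual ℝ X)
  simpa [hfu] using hl0.const_add (f w)

end WeakStar

theorem statement1_general (X : Type*) [NormedAddCommGroup X] [NormedSpace ℝ X]
    (Z : Submodule ℝ (WeakDual ℝ X)) (hZn : IsNorming X Z) (hZc : NormClosed X Z)
    (xs : WeakDual ℝ X) (hxs : xs ∉ S1 X (Z : Set (WeakDual ℝ X))) :
    xs ∉ Z ∧
    (∀ f : ↥(Z ⊔ Submodule.span ℝ {xs}) →ₗ[ℝ] ℝ,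
      (∀ (w : ↥(Z ⊔ Submodule.span ℝ {xs})) (z : WeakDual ℝ X) (l : ℝ),
        z ∈ Z → (w : WeakDual ℝ X) = z + l • xs → f w = l) →
      (WStarSeqCont X f ∧ ¬ Continuous f)) ∧
    ¬ MazurProp X (Z ⊔ Submodule.span ℝ {xs}) ∧
    ¬ FullyMazur X := by
  have hxsZ : xs ∉ Z := fun h => hxs ⟨fun _ => xs, fun _ => h, tendsto_const_nhds⟩
  have hcoord (f) (hf : IsCoordAlong Z xs f) : WStarSeqCont X f ∧ ¬ Continuous f :=
    ⟨hf.wStarSeqCont hxs, hf.not_continuous hZn.dense⟩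
  have hnotMazur : ¬ MazurProp X (Z ⊔ Submodule.span ℝ {xs}) := fun hM => by
    obtain ⟨f, hf⟩ := exists_isCoordAlong hxsZ
    exact (hcoord f hf).2 (hM f (hcoord f hf).1)
  exact ⟨hxsZ, hcoord, hnotMazur,
    fun hFM => hnotMazur (hFM _ (hZn.mono_s1 le_sup_left) (hZc.sup_span_singleton xs))⟩

/-- If `Z ⊆ X*` is norming and norm-closed and `x* ∉ S₁(Z)`, then `x* ∉ Z`
and the functional `f(z + λx*) = λ` on `Y = Z ⊕ ℝx*` is weak-star sequentially continuous
but not weak-star continuous; in particular `(Y, w*)` fails the Mazur property and `X` is not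
fully Mazur. -/
theorem statement1 (X : Type*) [NormedAddCommGroup X] [NormedSpace ℝ X] [CompleteSpace X]
    (Z : Submodule ℝ (WeakDual ℝ X)) (hZn : IsNorming X Z) (hZc : NormClosed X Z)
    (xs : WeakDual ℝ X) (hxs : xs ∉ S1 X (Z : Set (WeakDual ℝ X))) :
    xs ∉ Z ∧
    (∀ f : ↥(Z ⊔ Submodule.span ℝ {xs}) →ₗ[ℝ] ℝ,
      (∀ (w : ↥(Z ⊔ Submodule.span ℝ {xs})) (z : WeakDual ℝ X) (l : ℝ),
        z ∈ Z → (w : WeakDual ℝ X) = z + l • xs → f w = l) →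
      (WStarSeqCont X f ∧ ¬ Continuous f)) ∧
    ¬ MazurProp X (Z ⊔ Submodule.span ℝ {xs}) ∧
    ¬ FullyMazur X :=
  statement1_general X Z hZn hZc xs hxs
end

section
/- If a real Banach space X is fully Mazur, then every closed linear subspace X₀ ⊆ X is fully Mazur. -/
open Filter Topology

/-! Given a norming, norm-closed `Y ⊆ X₀*`, let `Ỹ ⊆ X*` consist of the functionals whose
restriction to `X₀` lies in `Y`. By Hahn–Banach every element of `Y` extends to `X` with the same
norm, and `Ỹ` contains the annihilator of `X₀`; together these make `Ỹ` norming, while it is norm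
closed as a preimage under the restriction map. If `f` is w*-sequentially continuous on `Y`, then
`f ∘ restriction` is w*-sequentially continuous on `Ỹ`, hence w*-continuous as `X` is fully Mazur,
i.e. it is evaluation at some `x ∈ X`. It vanishes on the annihilator of `X₀`, so `x ∈ X₀`, and `f`
itself is evaluation at `x`. -/

open Metric

theorem exists_eq_eval_of_continuous_s3 {𝕜 E : Type*} [NontriviallyNormedField 𝕜] [AddCommGroup E]
    [TopologicalSpace E] [Module 𝕜 E] (W : Submodule 𝕜 (WeakDual 𝕜 E)) (g : W →ₗ[𝕜] 𝕜)
    (hg : Continuous g) : ∃ x : E, ∀ w : W, g w = (w : WeakDual 𝕜 E) x := by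
  let ev : E →ₗ[𝕜] W →ₗ[𝕜] 𝕜 := ((topDualPairing 𝕜 E).comp W.subtype).flip
  have htop : ⨅ x, TopologicalSpace.induced (ev x) inferInstance =
      (inferInstance : TopologicalSpace W) := by
    change _ = TopologicalSpace.induced Subtype.val
      (TopologicalSpace.induced (fun (v : WeakDual 𝕜 E) x => v x)
        (⨅ x, TopologicalSpace.induced (fun f : E → 𝕜 => f x) inferInstance))
    simp only [induced_iInf, induced_compose]
    rfl
  have hspan : g ∈ Submodule.span 𝕜 (Set.range ev) := by
    rw [LinearMap.mem_span_iff_continuous (E := W) (f := ev) g, htop]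
    exact hg
  rw [← LinearMap.coe_range, Submodule.span_eq] at hspan
  obtain ⟨x, rfl⟩ := hspan
  exact ⟨x, fun w => rfl⟩

noncomputable section Norming

variable {X : Type*} [NormedAddCommGroup X] [NormedSpace ℝ X]

lemma abs_apply_le_of_dnorm_le_one {v : WeakDual ℝ X} (hv : dnorm X v ≤ 1) (x : X) :
    |v x| ≤ ‖x‖ :=
  ((WeakDual.toStrongDual v).le_opNorm x).trans (mul_le_of_le_one_left (norm_nonneg x) hv)

def normingSup (Y : Submodule ℝ (WeakDual ℝ X)) (x : X) : ℝ :=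
  sSup {r | ∃ y ∈ Y, dnorm X y ≤ 1 ∧ r = y x}

variable {Y : Submodule ℝ (WeakDual ℝ X)}

lemma le_normingSup {v : WeakDual ℝ X} (hv : v ∈ Y) (hv₁ : dnorm X v ≤ 1) (x : X) :
    v x ≤ normingSup Y x := by
  refine le_csSup ⟨‖x‖, ?_⟩ ⟨v, hv, hv₁, rfl⟩
  rintro _ ⟨y, -, hy₁, rfl⟩
  exact (le_abs_self _).trans (abs_apply_le_of_dnorm_le_one hy₁ x)

lemma normingSup_le {x : X} {b : ℝ} (h : ∀ y ∈ Y, dnorm X y ≤ 1 → y x ≤ b) :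
    normingSup Y x ≤ b := by
  refine csSup_le ⟨0, 0, Y.zero_mem, by simp [dnorm], rfl⟩ ?_
  rintro _ ⟨y, hy, hy₁, rfl⟩
  exact h y hy hy₁

end Norming

noncomputable section Restriction

variable {X : Type*} [NormedAddCommGroup X] [NormedSpace ℝ X] (X₀ : Submodule ℝ X)

def restrictDual : WeakDual ℝ X →L[ℝ] WeakDual ℝ X₀ where
  toFun v := StrongDual.toWeakDual ((WeakDual.toStrongDual v).comp X₀.subtypeL)
  map_add' _ _ := rfl
  map_smul' _ _ := rfl
  cont := WeakDual.continuous_of_continuous_eval fun z => WeakDual.eval_continuous (z : X)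

@[simp]
lemma restrictDual_apply (v : WeakDual ℝ X) (z : X₀) : restrictDual X₀ v z = v z := rfl

lemma exists_restrictDual_eq (y : WeakDual ℝ X₀) :
    ∃ v : WeakDual ℝ X, restrictDual X₀ v = y ∧ dnorm X v = dnorm X₀ y := by
  obtain ⟨g, hg, hgnorm⟩ := exists_extension_norm_eq X₀ (WeakDual.toStrongDual y)
  exact ⟨StrongDual.toWeakDual g, DFunLike.ext _ _ hg, hgnorm⟩

lemma exists_restrictDual_eq_zero (x : X) :
    ∃ v : WeakDual ℝ X, restrictDual X₀ v = 0 ∧ dnorm X v ≤ 1 ∧ v x = infDist x X₀ := by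
  obtain ⟨g, hg₁, hgx⟩ := exists_dual_vector'' ℝ (X₀.mkQ x)
  refine ⟨StrongDual.toWeakDual (g.comp X₀.mkQL), ?_, ?_, ?_⟩
  · refine DFunLike.ext _ _ fun z => ?_
    change g (X₀.mkQ z) = 0
    rw [Submodule.mkQ_apply, (Submodule.Quotient.mk_eq_zero X₀).mpr z.2, map_zero]
  · refine ContinuousLinearMap.opNorm_le_bound _ zero_le_one fun z => ?_
    calc ‖g (X₀.mkQ z)‖ ≤ ‖g‖ * ‖X₀.mkQ z‖ := g.le_opNorm _
      _ ≤ 1 * ‖z‖ := mul_le_mul hg₁ (Submodule.Quotient.norm_mk_le X₀ z) (norm_nonneg _) zero_le_one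
  · exact hgx.trans (QuotientAddGroup.norm_mk (S := X₀.toAddSubgroup) x)

variable {X₀} {Y : Submodule ℝ (WeakDual ℝ X₀)}

variable (Y) in
def comapRestrictDual : Submodule ℝ (WeakDual ℝ X) :=
  Y.comap (restrictDual X₀).toLinearMap

lemma mem_comapRestrictDual {v : WeakDual ℝ X} :
    v ∈ comapRestrictDual Y ↔ restrictDual X₀ v ∈ Y := Iff.rfl

lemma mem_of_forall_restrictDual_eq_zero (hX₀ : IsClosed (X₀ : Set X)) {x : X}
    (h : ∀ v, restrictDual X₀ v = 0 → v x = 0) : x ∈ X₀ := by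
  obtain ⟨v, hv₀, -, hvx⟩ := exists_restrictDual_eq_zero X₀ x
  rw [← SetLike.mem_coe, ← hX₀.closure_eq, mem_closure_iff_infDist_zero ⟨0, X₀.zero_mem⟩,
    ← hvx, h v hv₀]

lemma infDist_le_normingSup_comapRestrictDual (x : X) :
    infDist x X₀ ≤ normingSup (comapRestrictDual Y) x := by
  obtain ⟨v, hv₀, hv₁, hvx⟩ := exists_restrictDual_eq_zero X₀ x
  have hv : v ∈ comapRestrictDual Y := mem_comapRestrictDual.mpr (hv₀ ▸ Y.zero_mem)
  exact hvx ▸ le_normingSup hv hv₁ x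

lemma normingSup_sub_le_normingSup_comapRestrictDual (x : X) (z : X₀) :
    normingSup Y z - ‖x - z‖ ≤ normingSup (comapRestrictDual Y) x := by
  rw [sub_le_iff_le_add]
  refine normingSup_le fun y hy hy₁ => ?_
  obtain ⟨v, rfl, hvnorm⟩ := exists_restrictDual_eq X₀ y
  have hv₁ : dnorm X v ≤ 1 := hvnorm ▸ hy₁
  have hvx := le_normingSup (Y := comapRestrictDual Y) hy hv₁ x
  have hvxz := (abs_le.mp (abs_apply_le_of_dnorm_le_one hv₁ (x - z))).1
  calc restrictDual X₀ v z = v x - v (x - z) := by simp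
    _ ≤ _ := by linarith

lemma isNorming_comapRestrictDual (hY : IsNorming X₀ Y) : IsNorming X (comapRestrictDual Y) := by
  obtain ⟨c, hc, hcY⟩ := hY
  refine ⟨c / (2 + c), by positivity, fun x => ?_⟩
  change _ ≤ normingSup _ x
  set s := normingSup (comapRestrictDual Y) x
  -- `s ≥ d(x, X₀)` and `s ≥ c‖x‖ - (1 + c) d(x, X₀)`, so `(2 + c) s ≥ c‖x‖`.
  have hdist : infDist x X₀ ≤ s := infDist_le_normingSup_comapRestrictDual x
  have happrox : (c * ‖x‖ - s) / (1 + c) ≤ infDist x X₀ := by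
    refine (le_infDist ⟨0, X₀.zero_mem⟩).mpr fun z hz => ?_
    have hz₁ : c * ‖z‖ ≤ normingSup Y ⟨z, hz⟩ := hcY ⟨z, hz⟩
    have hz₂ := normingSup_sub_le_normingSup_comapRestrictDual (Y := Y) x ⟨z, hz⟩
    have hz₃ := mul_le_mul_of_nonneg_left (norm_le_norm_add_norm_sub' x z) hc.le
    rw [div_le_iff₀ (by positivity), dist_eq_norm]
    linarith
  rw [div_le_iff₀ (by positivity)] at happrox
  rw [div_mul_eq_mul_div, div_le_iff₀ (by positivity)]
  linarith [mul_le_mul_of_nonneg_right hdist (by positivity : (0 : ℝ) ≤ 1 + c)]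

lemma normClosed_comapRestrictDual (hY : NormClosed X₀ Y) : NormClosed X (comapRestrictDual Y) := by
  unfold NormClosed at *
  rw [LinearEquiv.image_eq_preimage_symm] at *
  exact hY.preimage (ContinuousLinearMap.precomp ℝ X₀.subtypeL).continuous

lemma mazurProp_of_mazurProp_comapRestrictDual (hX₀ : IsClosed (X₀ : Set X))
    (h : MazurProp X (comapRestrictDual Y)) : MazurProp X₀ Y := by
  intro f hf
  let f' := f ∘ₗ (restrictDual X₀ : WeakDual ℝ X →ₗ[ℝ] WeakDual ℝ X₀).restrict
    (p := comapRestrictDual Y) (q := Y) fun _ hv => hv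
  obtain ⟨x, hx⟩ := exists_eq_eval_of_continuous_s3 _ f'
    (h f' fun u v hu => hf _ _ (((restrictDual X₀).continuous.tendsto _).comp hu))
  have hx₀ : x ∈ X₀ := mem_of_forall_restrictDual_eq_zero hX₀ fun v hv₀ => by
    rw [← hx ⟨v, mem_comapRestrictDual.mpr (hv₀ ▸ Y.zero_mem)⟩]
    exact (congrArg f (Subtype.ext hv₀)).trans (map_zero f)
  have hf_eval : ∀ y : Y, f y = (y : WeakDual ℝ X₀) ⟨x, hx₀⟩ := by
    intro y
    obtain ⟨v, hv, -⟩ := exists_restrictDual_eq X₀ y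
    have hvY : v ∈ comapRestrictDual Y := mem_comapRestrictDual.mpr (hv ▸ y.2)
    calc f y = f' ⟨v, hvY⟩ := congrArg f (Subtype.ext hv.symm)
      _ = v x := hx _
      _ = _ := by rw [← hv]; rfl
  rw [show ⇑f = fun y : Y => (y : WeakDual ℝ X₀) ⟨x, hx₀⟩ from funext hf_eval]
  exact (WeakDual.eval_continuous _).comp continuous_subtype_val

end Restriction

theorem statement3_general (X : Type*) [NormedAddCommGroup X] [NormedSpace ℝ X]
    (h : FullyMazur X) (X₀ : Submodule ℝ X) (hX₀ : IsClosed (X₀ : Set X)) :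
    FullyMazur ↥X₀ := by
  intro Y hY hY'
  exact mazurProp_of_mazurProp_comapRestrictDual hX₀
    (h _ (isNorming_comapRestrictDual hY) (normClosed_comapRestrictDual hY'))

/-- If a Banach space `X` is fully Mazur, then every closed linear
subspace of `X` is fully Mazur. -/
theorem statement3 (X : Type*) [NormedAddCommGroup X] [NormedSpace ℝ X] [CompleteSpace X]
    (h : FullyMazur X) (X₀ : Submodule ℝ X) (hX₀ : IsClosed (X₀ : Set X)) :
    FullyMazur ↥X₀ :=
  statement3_general X h X₀ hX₀
end

section
/- Let X be a real Banach space and let Y ⊆ X* be a w*-dense subspace such that: (i) every linear functional f : Y → ℝ whose restriction to each absolutely convex w*-compact subset of Y is w*-continuous is itself w*-continuous; and (ii) for every absolutely convex w*-compact set K ⊆ Y, every convex w*-sequentially closed subset of K is w*-closed. Then (Y, w*) has the Mazur property. -/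
open Filter Topology

/-!
Let `f` be a weak-star sequentially continuous functional on `Y` and `K ⊆ Y` absolutely convex
and weak-star compact. For every `a`, the sets `{y ∈ K | f y ≤ a}` and `{y ∈ K | f y ≥ a}` are
convex and sequentially closed (as `K` is closed), hence closed by (ii). So `f` is both lower and
upper semicontinuous on `K`, i.e. continuous there, and (i) makes `f` continuous.
-/

open Set

theorem continuousOn_of_isClosed_inter_preimage_Iic_Ici {α γ : Type*} [TopologicalSpace α]
    [LinearOrder γ] [TopologicalSpace γ] [OrderTopology γ] {f : α → γ} {s : Set α}
    (hIic : ∀ b, IsClosed (s ∩ f ⁻¹' Iic b)) (hIci : ∀ b, IsClosed (s ∩ f ⁻¹' Ici b)) :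
    ContinuousOn f s :=
  continuousOn_iff_lower_upperSemicontinuousOn.2
    ⟨lowerSemicontinuousOn_iff_preimage_Iic.2 fun b =>
        ⟨_, hIic b, by rw [← inter_assoc, inter_self]⟩,
      upperSemicontinuousOn_iff_preimage_Ici.2 fun b =>
        ⟨_, hIci b, by rw [← inter_assoc, inter_self]⟩⟩

theorem IsSeqClosed.image_subtype_val {α : Type*} [TopologicalSpace α] {s : Set α} {t : Set s}
    (ht : IsSeqClosed t) (hts : closure (Subtype.val '' t) ⊆ s) :
    IsSeqClosed (Subtype.val '' t) := by
  intro u p hu hp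
  have hps : p ∈ s := hts (mem_closure_of_tendsto hp (Eventually.of_forall hu))
  choose w hwt hwu using hu
  have hw : Tendsto w atTop (𝓝 ⟨p, hps⟩) := by
    rw [tendsto_subtype_rng]
    simpa only [hwu] using hp
  exact ⟨⟨p, hps⟩, ht hwt hw, rfl⟩

theorem WStarSeqCont.seqContinuous {X : Type*} [NormedAddCommGroup X] [NormedSpace ℝ X]
    {Y : Submodule ℝ (WeakDual ℝ X)} {f : Y →ₗ[ℝ] ℝ} (hf : WStarSeqCont X f) :
    SeqContinuous f :=
  fun u y h => hf u y (tendsto_subtype_rng.1 h)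

section ConvexSeqClosed

variable {E : Type*} [AddCommGroup E] [Module ℝ E] [TopologicalSpace E] {Y : Submodule ℝ E}
  {K : Set E} {f : Y →ₗ[ℝ] ℝ}

theorem isClosed_inter_preimage_of_seqContinuous (hKY : K ⊆ Y) (hKc : IsClosed K)
    (hKconv : Convex ℝ K) (hK : ∀ C ⊆ K, Convex ℝ C → IsSeqClosed C → IsClosed C)
    (hf : SeqContinuous f) {t : Set ℝ} (ht : IsClosed t) (htconv : Convex ℝ t) :
    IsClosed (Subtype.val ⁻¹' K ∩ f ⁻¹' t : Set Y) := by
  set S : Set Y := Subtype.val ⁻¹' K ∩ f ⁻¹' t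
  have hSK : Subtype.val '' S ⊆ K := image_subset_iff.2 inter_subset_left
  have hSconv : Convex ℝ S :=
    (hKconv.linear_preimage Y.subtype).inter (htconv.linear_preimage f)
  have hSseq : IsSeqClosed S := fun u p hu hp =>
    ⟨hKc.isSeqClosed.preimage continuous_subtype_val.seqContinuous (fun n => (hu n).1) hp,
      ht.isSeqClosed.preimage hf (fun n => (hu n).2) hp⟩
  have hSclosed : IsClosed (Subtype.val '' S) :=
    hK _ hSK (hSconv.linear_image Y.subtype)
      (hSseq.image_subtype_val ((closure_minimal hSK hKc).trans hKY))
  rw [← preimage_image_eq S Subtype.val_injective]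
  exact hSclosed.preimage continuous_subtype_val

theorem continuousOn_preimage_of_seqContinuous (hKY : K ⊆ Y) (hKc : IsClosed K)
    (hKconv : Convex ℝ K) (hK : ∀ C ⊆ K, Convex ℝ C → IsSeqClosed C → IsClosed C)
    (hf : SeqContinuous f) : ContinuousOn f (Subtype.val ⁻¹' K) :=
  continuousOn_of_isClosed_inter_preimage_Iic_Ici
    (fun b => isClosed_inter_preimage_of_seqContinuous hKY hKc hKconv hK hf isClosed_Iic
      (convex_Iic b))
    (fun b => isClosed_inter_preimage_of_seqContinuous hKY hKc hKconv hK hf isClosed_Ici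
      (convex_Ici b))

end ConvexSeqClosed

theorem statement6_general (X : Type*) [NormedAddCommGroup X] [NormedSpace ℝ X]
    (Y : Submodule ℝ (WeakDual ℝ X))
    (hi : MackeyComplete X Y)
    (hii : ∀ K : Set (WeakDual ℝ X), K ⊆ (Y : Set (WeakDual ℝ X)) → Convex ℝ K →
      Balanced ℝ K → IsCompact K →
      ∀ C : Set (WeakDual ℝ X), C ⊆ K → Convex ℝ C →
        (∀ (u : ℕ → WeakDual ℝ X) (z : WeakDual ℝ X),
          (∀ n, u n ∈ C) → Tendsto u atTop (𝓝 z) → z ∈ C) →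
        IsClosed C) :
    MazurProp X Y := fun f hf =>
  hi f fun K hKY hKconv hKbal hKcomp =>
    continuousOn_preimage_of_seqContinuous hKY hKcomp.isClosed hKconv
      (hii K hKY hKconv hKbal hKcomp) hf.seqContinuous

/-- Let `Y ⊆ X*` be weak-star dense satisfying (i) Grothendieck's
completeness condition for `(X, μ(X,Y))` and (ii) for every absolutely convex weak-star
compact `K ⊆ Y`, every convex weak-star sequentially closed subset of `K` is weak-star
closed. Then `(Y, w*)` has the Mazur property. -/
theorem statement6 (X : Type*) [NormedAddCommGroup X] [NormedSpace ℝ X] [CompleteSpace X]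
    (Y : Submodule ℝ (WeakDual ℝ X)) (hYd : Dense (Y : Set (WeakDual ℝ X)))
    (hi : MackeyComplete X Y)
    (hii : ∀ K : Set (WeakDual ℝ X), K ⊆ (Y : Set (WeakDual ℝ X)) → Convex ℝ K →
      Balanced ℝ K → IsCompact K →
      ∀ C : Set (WeakDual ℝ X), C ⊆ K → Convex ℝ C →
        (∀ (u : ℕ → WeakDual ℝ X) (z : WeakDual ℝ X),
          (∀ n, u n ∈ C) → Tendsto u atTop (𝓝 z) → z ∈ C) →
        IsClosed C) :
    MazurProp X Y :=
  statement6_general X Y hi hii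
end

section
/- Let X be a real Banach space with property (E'), i.e., every convex, norm-bounded, w*-sequentially closed subset of X* is w*-closed, and let Y ⊆ X* be a w*-dense and norm-closed subspace. Then the following are equivalent: (a) every linear functional f : Y → ℝ whose restriction to each absolutely convex w*-compact subset of Y is w*-continuous is itself w*-continuous; (b) (Y, w*) has the Mazur property. -/
open Filter Topology

/-!
Mazur ⇒ (a): a functional satisfying Grothendieck's condition is w*-sequentially continuous. If
`uₙ → y` weak-star in `Y`, then `wₙ = uₙ - y` is w*-null, hence norm bounded by Banach–Steinhaus,
and `K = {∑ lₙ wₙ : ∑ |lₙ| ≤ 1}` is an absolutely convex set containing every `wₙ`. The series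
converge in norm, so `K ⊆ Y` because `Y` is norm closed; and `K` is w*-compact as the image of the
`ℓ¹`-ball, compact in the product topology, under `l ↦ ∑ lₙ wₙ`, which is continuous there because
`wₙ(x) → 0` makes the partial sums of `∑ lₙ wₙ(x)` converge uniformly on the ball. Continuity
of `f` on `K` then gives `f wₙ → 0`.

(a) ⇒ Mazur: for a w*-sequentially continuous `f` and an absolutely convex w*-compact `K ⊆ Y`
(norm bounded by Banach–Steinhaus), the sets `{z ∈ K : f z ≤ r}` and `{z ∈ K : f z ≥ r}` are
convex, bounded and w*-sequentially closed, hence w*-closed by (E′); so `f` is both lower and upper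
semicontinuous on `K`.
-/

open Set WeakDual

/-- The closed `ℓ¹`-ball, described by finite partial sums so that it is visibly closed in the
product topology of `ℕ → ℝ`. -/
def l1ClosedBall (r : ℝ) : Set (ℕ → ℝ) := {l | ∀ s : Finset ℕ, ∑ n ∈ s, |l n| ≤ r}

section l1ClosedBall

variable {r : ℝ} {l : ℕ → ℝ}

theorem isCompact_l1ClosedBall (r : ℝ) : IsCompact (l1ClosedBall r) := by
  have hsub : l1ClosedBall r ⊆ univ.pi fun _ => Icc (-r) r := fun l hl n _ => by
    simpa [abs_le] using hl {n}
  have hclosed : IsClosed (l1ClosedBall r) := by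
    simp only [l1ClosedBall, ofPred_forall]
    exact isClosed_iInter fun s => isClosed_le (by fun_prop) continuous_const
  exact (isCompact_univ_pi fun _ => isCompact_Icc).of_isClosed_subset hclosed hsub

theorem convex_l1ClosedBall (r : ℝ) : Convex ℝ (l1ClosedBall r) := by
  intro l hl m hm a b ha hb hab s
  calc ∑ n ∈ s, |(a • l + b • m) n|
      ≤ ∑ n ∈ s, (a * |l n| + b * |m n|) := Finset.sum_le_sum fun n _ => by
        simpa [abs_mul, abs_of_nonneg ha, abs_of_nonneg hb] using abs_add_le (a * l n) (b * m n)
    _ = a * ∑ n ∈ s, |l n| + b * ∑ n ∈ s, |m n| := by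
        rw [Finset.sum_add_distrib, Finset.mul_sum, Finset.mul_sum]
    _ ≤ a * r + b * r := by gcongr; exacts [hl s, hm s]
    _ = r := by rw [← add_mul, hab, one_mul]

theorem balanced_l1ClosedBall (r : ℝ) : Balanced ℝ (l1ClosedBall r) := by
  rintro a ha _ ⟨l, hl, rfl⟩ s
  calc ∑ n ∈ s, |(a • l) n| = |a| * ∑ n ∈ s, |l n| := by simp [abs_mul, Finset.mul_sum]
    _ ≤ r := (mul_le_of_le_one_left (Finset.sum_nonneg fun n _ => abs_nonneg _)
      (by simpa using ha)).trans (hl s)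

theorem summable_abs_of_mem_l1ClosedBall (hl : l ∈ l1ClosedBall r) : Summable fun n => |l n| :=
  summable_of_sum_le (fun n => abs_nonneg (l n)) hl

theorem tsum_abs_le_of_mem_l1ClosedBall (hl : l ∈ l1ClosedBall r) : ∑' n, |l n| ≤ r :=
  (summable_abs_of_mem_l1ClosedBall hl).tsum_le_of_sum_le hl

theorem comp_add_right_mem_l1ClosedBall (hl : l ∈ l1ClosedBall r) (N : ℕ) :
    (fun k => l (k + N)) ∈ l1ClosedBall r := fun s => by
  simpa using hl (s.map (addRightEmbedding N))

theorem single_mem_l1ClosedBall (n : ℕ) : Pi.single n 1 ∈ l1ClosedBall 1 := fun s => by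
  simp only [Pi.single_apply, apply_ite, abs_one, abs_zero, Finset.sum_ite_eq']
  split_ifs <;> norm_num

end l1ClosedBall

section Series

variable {E : Type*} [NormedAddCommGroup E] [NormedSpace ℝ E] {W : ℕ → E} {C r : ℝ}
  {l : ℕ → ℝ}

theorem summable_smul_of_mem_l1ClosedBall [CompleteSpace E] (hl : l ∈ l1ClosedBall r)
    (hW : ∀ n, ‖W n‖ ≤ C) : Summable fun n => l n • W n :=
  ((summable_abs_of_mem_l1ClosedBall hl).mul_right C).of_norm_bounded fun n => by
    rw [norm_smul, Real.norm_eq_abs]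
    exact mul_le_mul_of_nonneg_left (hW n) (abs_nonneg _)

theorem norm_tsum_smul_le_of_mem_l1ClosedBall (hl : l ∈ l1ClosedBall r) (hW : ∀ n, ‖W n‖ ≤ C) :
    ‖∑' n, l n • W n‖ ≤ r * C := by
  have hC : 0 ≤ C := (norm_nonneg _).trans (hW 0)
  calc ‖∑' n, l n • W n‖ ≤ (∑' n, |l n|) * C :=
        tsum_of_norm_bounded ((summable_abs_of_mem_l1ClosedBall hl).hasSum.mul_right C) fun n => by
          rw [norm_smul, Real.norm_eq_abs]
          exact mul_le_mul_of_nonneg_left (hW n) (abs_nonneg _)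
    _ ≤ r * C := mul_le_mul_of_nonneg_right (tsum_abs_le_of_mem_l1ClosedBall hl) hC

theorem tsum_const_smul_coeff (a : ℝ) (l : ℕ → ℝ) (W : ℕ → E) :
    ∑' n, (a • l) n • W n = a • ∑' n, l n • W n := by
  simp only [Pi.smul_apply, smul_eq_mul, mul_smul]
  exact tsum_const_smul'' a

theorem convex_image_tsum_smul [CompleteSpace E] (hW : ∀ n, ‖W n‖ ≤ C) (r : ℝ) :
    Convex ℝ ((fun l => ∑' n, l n • W n) '' l1ClosedBall r) := by
  rintro _ ⟨l, hl, rfl⟩ _ ⟨m, hm, rfl⟩ a b ha hb hab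
  refine ⟨a • l + b • m, convex_l1ClosedBall r hl hm ha hb hab, ?_⟩
  have hsum : ∀ (c : ℝ) {k}, k ∈ l1ClosedBall r → Summable fun n => (c • k) n • W n :=
    fun c k hk => by
      simpa only [Pi.smul_apply, smul_eq_mul, mul_smul] using
        (summable_smul_of_mem_l1ClosedBall hk hW).const_smul c
  simp only [Pi.add_apply, add_smul]
  rw [(hsum a hl).tsum_add (hsum b hm), tsum_const_smul_coeff, tsum_const_smul_coeff]

theorem balanced_image_tsum_smul (W : ℕ → E) (r : ℝ) :
    Balanced ℝ ((fun l => ∑' n, l n • W n) '' l1ClosedBall r) := by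
  rintro a ha _ ⟨_, ⟨l, hl, rfl⟩, rfl⟩
  exact ⟨a • l, balanced_l1ClosedBall r a ha (smul_mem_smul_set hl), tsum_const_smul_coeff a l W⟩

theorem tsum_single_smul (k : ℕ) (W : ℕ → E) : ∑' n, (Pi.single k 1 : ℕ → ℝ) n • W n = W k := by
  simp [Pi.single_apply, ite_smul]

end Series

theorem continuousOn_tsum_mul_of_tendsto_zero {c : ℕ → ℝ} (hc : Tendsto c atTop (𝓝 0)) (r : ℝ) :
    ContinuousOn (fun l => ∑' n, l n * c n) (l1ClosedBall r) := by
  refine TendstoUniformlyOn.continuousOn (p := atTop)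
    (F := fun N l => ∑ n ∈ Finset.range N, l n * c n) ?_ (.of_forall fun N => by fun_prop)
  rw [Metric.tendstoUniformlyOn_iff]
  intro ε hε
  set δ := ε / (|r| + 1)
  have hδ : 0 < δ := by positivity
  have hrδ : r * δ < ε := by
    calc r * δ ≤ |r| * δ := by gcongr; exact le_abs_self r
      _ < (|r| + 1) * δ := by gcongr; linarith
      _ = ε := by simp only [δ]; field_simp
  obtain ⟨N₀, hN₀⟩ := Metric.tendsto_atTop.1 hc δ hδ
  filter_upwards [eventually_ge_atTop N₀] with N hN l hl
  have hcN : ∀ k, ‖c (k + N)‖ ≤ δ := fun k => by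
    simpa using (hN₀ (k + N) (by omega)).le
  have htail := comp_add_right_mem_l1ClosedBall hl N
  have hsum : Summable fun n => l n * c n :=
    (summable_nat_add_iff N).1 (summable_smul_of_mem_l1ClosedBall htail hcN)
  rw [← hsum.sum_add_tsum_nat_add N, Real.dist_eq, add_sub_cancel_left]
  exact (norm_tsum_smul_le_of_mem_l1ClosedBall htail hcN).trans_lt hrδ

section WeakStar

variable {X : Type*} [NormedAddCommGroup X] [NormedSpace ℝ X]

theorem exists_dnorm_le_of_isCompact [CompleteSpace X] {K : Set (WeakDual ℝ X)}
    (hK : IsCompact K) : ∃ M, ∀ z ∈ K, dnorm X z ≤ M := by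
  obtain ⟨M, hM⟩ := banach_steinhaus (g := fun z : K => toStrongDual (z : WeakDual ℝ X)) fun x => by
    obtain ⟨C, hC⟩ := hK.exists_bound_of_continuousOn (eval_continuous x).continuousOn
    exact ⟨C, fun z => hC z z.2⟩
  exact ⟨M, fun z hz => hM ⟨z, hz⟩⟩

theorem continuousOn_toWeakDual_tsum_smul {W : ℕ → StrongDual ℝ X} {C : ℝ}
    (hW : ∀ x, Tendsto (fun n => W n x) atTop (𝓝 0)) (hC : ∀ n, ‖W n‖ ≤ C) (r : ℝ) :
    ContinuousOn (fun l => StrongDual.toWeakDual (∑' n, l n • W n)) (l1ClosedBall r) := by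
  rw [continuousOn_iff_continuous_domRestrict]
  refine continuous_of_continuous_eval fun x => ?_
  have h : ContinuousOn (fun l => StrongDual.toWeakDual (∑' n, l n • W n) x) (l1ClosedBall r) :=
    (continuousOn_tsum_mul_of_tendsto_zero (hW x) r).congr fun l hl => by
      simpa using (ContinuousLinearMap.apply ℝ ℝ x).map_tsum
        (summable_smul_of_mem_l1ClosedBall hl hC)
  exact continuousOn_iff_continuous_domRestrict.1 h

theorem exists_absConvex_isCompact_of_tendsto_zero [CompleteSpace X]
    {Y : Submodule ℝ (WeakDual ℝ X)} (hYc : NormClosed X Y) {v : ℕ → WeakDual ℝ X}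
    (hvY : ∀ n, v n ∈ Y) (hv : Tendsto v atTop (𝓝 0)) :
    ∃ K ⊆ (Y : Set (WeakDual ℝ X)), Convex ℝ K ∧ Balanced ℝ K ∧ IsCompact K ∧ ∀ n, v n ∈ K := by
  set W : ℕ → StrongDual ℝ X := fun n => toStrongDual (v n)
  obtain ⟨C, hC⟩ : ∃ C, ∀ n, ‖W n‖ ≤ C := by
    obtain ⟨C, hC⟩ := exists_dnorm_le_of_isCompact hv.isCompact_insert_range
    exact ⟨C, fun n => hC _ (mem_insert_of_mem _ ⟨n, rfl⟩)⟩
  have hW : ∀ x, Tendsto (fun n => W n x) atTop (𝓝 0) := fun x =>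
    ((eval_continuous x).tendsto 0).comp hv
  set Φ : (ℕ → ℝ) → StrongDual ℝ X := fun l => ∑' n, l n • W n
  refine ⟨toStrongDual ⁻¹' (Φ '' l1ClosedBall 1), ?_, ?_, ?_, ?_, ?_⟩
  · let YS := Y.map (toStrongDual : WeakDual ℝ X ≃ₗ[ℝ] StrongDual ℝ X).toLinearMap
    have hYS : IsClosed (YS : Set (StrongDual ℝ X)) := hYc
    rintro z ⟨l, -, hz⟩
    have : toStrongDual z ∈ YS :=
      hz ▸ tsum_mem hYS fun n => YS.smul_mem _ (Submodule.mem_map_of_mem (hvY n))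
    simpa [YS] using this
  · exact (convex_image_tsum_smul hC 1).linear_preimage toStrongDual.toLinearMap
  · exact (balanced_image_tsum_smul W 1).mulActionHom_preimage
      toStrongDual.toLinearMap.toMulActionHom
  · rw [← LinearEquiv.image_symm_eq_preimage, ← image_comp]
    exact (isCompact_l1ClosedBall 1).image_of_continuousOn
      (continuousOn_toWeakDual_tsum_smul hW hC 1)
  · exact fun n => ⟨Pi.single n 1, single_mem_l1ClosedBall n, tsum_single_smul n W⟩

end WeakStar

section Mackey

variable {X : Type*} [NormedAddCommGroup X] [NormedSpace ℝ X] {Y : Submodule ℝ (WeakDual ℝ X)}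

theorem tendsto_zero_of_grothendieckCond [CompleteSpace X] (hYc : NormClosed X Y)
    {f : Y →ₗ[ℝ] ℝ} (hf : GrothendieckCond X f) {v : ℕ → Y}
    (hv : Tendsto (fun n => (v n : WeakDual ℝ X)) atTop (𝓝 0)) :
    Tendsto (fun n => f (v n)) atTop (𝓝 0) := by
  obtain ⟨K, hKY, hKc, hKb, hK, hvK⟩ :=
    exists_absConvex_isCompact_of_tendsto_zero hYc (fun n => (v n).2) hv
  have h0K : ((0 : Y) : WeakDual ℝ X) ∈ K := hKb.zero_mem ⟨_, hvK 0⟩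
  have hv' : Tendsto v atTop (𝓝[Subtype.val ⁻¹' K] 0) :=
    tendsto_nhdsWithin_iff.2 ⟨IsEmbedding.subtypeVal.tendsto_nhds_iff.2 hv, .of_forall hvK⟩
  simpa [Function.comp_def] using ((hf K hKY hKc hKb hK) 0 h0K).tendsto.comp hv'

theorem wStarSeqCont_of_grothendieckCond [CompleteSpace X] (hYc : NormClosed X Y)
    {f : Y →ₗ[ℝ] ℝ} (hf : GrothendieckCond X f) : WStarSeqCont X f := by
  intro u y hu
  have h := tendsto_zero_of_grothendieckCond hYc hf (v := fun n => u n - y)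
    (by simpa using hu.sub_const (y : WeakDual ℝ X))
  simpa using h.add_const (f y)

end Mackey

section PropertyE

variable (X : Type*) [NormedAddCommGroup X] [NormedSpace ℝ X]

def HasPropertyE' : Prop :=
  ∀ C : Set (WeakDual ℝ X), Convex ℝ C → (∃ M, ∀ y ∈ C, dnorm X y ≤ M) → IsSeqClosed C →
    IsClosed C

variable {X} {Y : Submodule ℝ (WeakDual ℝ X)}

theorem WStarSeqCont.neg {f : Y →ₗ[ℝ] ℝ} (hf : WStarSeqCont X f) : WStarSeqCont X (-f) :=
  fun u y hu => by simpa using (hf u y hu).neg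

theorem isClosed_image_sublevel_of_wStarSeqCont (hE' : HasPropertyE' X) {f : Y →ₗ[ℝ] ℝ}
    (hf : WStarSeqCont X f) {K : Set (WeakDual ℝ X)} (hKY : K ⊆ Y) (hKc : Convex ℝ K)
    (hKcl : IsClosed K) (hKb : ∃ M, ∀ z ∈ K, dnorm X z ≤ M) (r : ℝ) :
    IsClosed (Y.subtype '' ({q | f q ≤ r} ∩ Y.subtype ⁻¹' K)) := by
  refine hE' _ (((convex_halfSpace_le f.isLinear r).inter (hKc.linear_preimage _)).linear_image _)
    ?_ ?_
  · obtain ⟨M, hM⟩ := hKb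
    exact ⟨M, by rintro _ ⟨q, ⟨-, hq⟩, rfl⟩; exact hM _ hq⟩
  · intro u z hu hz
    choose q hq hqu using hu
    have hzK : z ∈ K := hKcl.mem_of_tendsto hz (.of_forall fun n => hqu n ▸ (hq n).2)
    refine ⟨⟨z, hKY hzK⟩, ⟨?_, hzK⟩, rfl⟩
    refine le_of_tendsto' (hf q ⟨z, hKY hzK⟩ ?_) fun n => (hq n).1
    rwa [show (fun n => (q n : WeakDual ℝ X)) = u from funext hqu]

theorem grothendieckCond_of_wStarSeqCont [CompleteSpace X] (hE' : HasPropertyE' X)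
    {f : Y →ₗ[ℝ] ℝ} (hf : WStarSeqCont X f) : GrothendieckCond X f := by
  intro K hKY hKc _ hK
  have hclosed : ∀ g : Y →ₗ[ℝ] ℝ, WStarSeqCont X g → ∀ r,
      IsClosed ((Subtype.val ⁻¹' K).domRestrict (fun y : Y => g y) ⁻¹' Iic r) := fun g hg r => by
    convert (isClosed_image_sublevel_of_wStarSeqCont hE' hg hKY hKc hK.isClosed
      (exists_dnorm_le_of_isCompact hK) r).preimage
      (continuous_subtype_val.comp continuous_subtype_val) using 1
    ext q
    have hq : ((q : Y) : WeakDual ℝ X) ∈ K := q.2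
    simp [domRestrict_apply, hq]
  rw [continuousOn_iff_continuous_domRestrict, continuous_iff_lower_upperSemicontinuous,
    lowerSemicontinuous_iff_isClosed_preimage, upperSemicontinuous_iff_isClosed_preimage]
  refine ⟨hclosed f hf, fun r => ?_⟩
  convert hclosed (-f) hf.neg (-r) using 1
  ext q
  simp [domRestrict_apply]

end PropertyE

theorem statement7_general (X : Type*) [NormedAddCommGroup X] [NormedSpace ℝ X] [CompleteSpace X]
    (hE' : ∀ C : Set (WeakDual ℝ X), Convex ℝ C → (∃ M : ℝ, ∀ y ∈ C, dnorm X y ≤ M) →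
      (∀ (u : ℕ → WeakDual ℝ X) (z : WeakDual ℝ X),
        (∀ n, u n ∈ C) → Tendsto u atTop (𝓝 z) → z ∈ C) →
      IsClosed C)
    (Y : Submodule ℝ (WeakDual ℝ X)) (hYc : NormClosed X Y) :
    MackeyComplete X Y ↔ MazurProp X Y :=
  ⟨fun hMackey f hf => hMackey f (grothendieckCond_of_wStarSeqCont hE' hf),
    fun hMazur f hf => hMazur f (wStarSeqCont_of_grothendieckCond hYc hf)⟩

/-- If `X` has property (E′) — every convex norm-bounded weak-star
sequentially closed subset of `X*` is weak-star closed — and `Y ⊆ X*` is weak-star dense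
and norm-closed, then Grothendieck's completeness condition for `(X, μ(X,Y))` holds iff
`(Y, w*)` has the Mazur property. -/
theorem statement7 (X : Type*) [NormedAddCommGroup X] [NormedSpace ℝ X] [CompleteSpace X]
    (hE' : ∀ C : Set (WeakDual ℝ X), Convex ℝ C → (∃ M : ℝ, ∀ y ∈ C, dnorm X y ≤ M) →
      (∀ (u : ℕ → WeakDual ℝ X) (z : WeakDual ℝ X),
        (∀ n, u n ∈ C) → Tendsto u atTop (𝓝 z) → z ∈ C) →
      IsClosed C)
    (Y : Submodule ℝ (WeakDual ℝ X)) (hYd : Dense (Y : Set (WeakDual ℝ X)))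
    (hYc : NormClosed X Y) :
    MackeyComplete X Y ↔ MazurProp X Y :=
  statement7_general X hE' Y hYc
end

section
/- The Banach space C([0, ω₁]) of continuous real-valued functions on the ordinal interval [0, ω₁] (where ω₁ is the first uncountable ordinal, and [0, ω₁] carries the order topology, making it a compact Hausdorff space) is not fully Mackey complete: there exist a norming and norm-closed subspace Y ⊆ C([0, ω₁])* and a linear functional f : Y → ℝ which is not w*-continuous but whose restriction to each absolutely convex w*-compact subset of Y is w*-continuous. -/
open Filter Topology

noncomputable instance : CompactSpace (Set.Iic (Cardinal.aleph 1).ord) :=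
  isCompact_iff_compactSpace.mp (by rw [← Set.Icc_bot]; exact isCompact_Icc)

/-!
Let `Y` be the norm-closed span of the evaluations `δₚ` at the isolated points `p < ω₁` and at
`ω₁` itself. Testing against the norm-continuous functionals `μ ↦ μ g` shows that every `μ ∈ Y` is
`∑ₚ μ{p} δₚ + (μ 1 - ∑ₚ μ{p}) δ_ω₁`, because this holds on the generators. The functional
`f μ = ∑ₚ μ{p}` is not weak-star continuous, since `δ_{c+1} → δ_ω₁` while `f δ_{c+1} = 1` and
`f δ_ω₁ = 0`. It is weak-star sequentially continuous: countably many functionals have countably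
many atoms, all below some `β < ω₁`, and on them `f` is evaluation at the indicator of `[0, β]`.
Finally, the coordinates `μ ↦ μ 1` and `μ ↦ μ{p}` embed a weak-star compact subset of `Y` into a
Σ-product, so it is Fréchet–Urysohn and sequential continuity is enough.
-/

open Set

section FrechetUrysohn

variable {T ι : Type*} [TopologicalSpace T] {e : ι → T → ℝ}

lemma exists_mem_forall_abs_sub_lt_of_mem_closure (he : ∀ i, Continuous (e i)) {A : Set T}
    {z : T} (hz : z ∈ closure A) (F : Finset ι) {ε : ℝ} (hε : 0 < ε) :
    ∃ y ∈ A, ∀ i ∈ F, |e i y - e i z| < ε := by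
  have hU : IsOpen (⋂ i ∈ F, {y | |e i y - e i z| < ε}) :=
    isOpen_biInter_finset fun i _ => isOpen_lt ((he i).sub continuous_const).abs continuous_const
  obtain ⟨y, hyU, hyA⟩ := mem_closure_iff.1 hz _ hU (by simp [hε])
  exact ⟨y, hyA, by simpa using hyU⟩

variable [CompactSpace T]

lemma tendsto_of_forall_tendsto_apply (he : ∀ i, Continuous (e i))
    (hsep : Function.Injective fun x i => e i x) {α : Type*} {l : Filter α} {a : α → T} {z : T}
    (h : ∀ i, Tendsto (fun n => e i (a n)) l (𝓝 (e i z))) : Tendsto a l (𝓝 z) :=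
  ((continuous_pi he).isClosedEmbedding hsep).tendsto_nhds_iff.2 (tendsto_pi_nhds.2 h)

/-- Corson compacta are Fréchet–Urysohn. -/
theorem frechetUrysohnSpace_of_countable_support (he : ∀ i, Continuous (e i))
    (hsep : Function.Injective fun x i => e i x)
    (hsupp : ∀ x, (Function.support fun i => e i x).Countable) : FrechetUrysohnSpace T := by
  classical
  refine ⟨fun A z hz => ?_⟩
  rcases isEmpty_or_nonempty ι with hι | hι
  · obtain ⟨y, -, hy⟩ := mem_closure_iff.1 hz univ isOpen_univ trivial
    exact ⟨fun _ => y, fun _ => hy, tendsto_of_forall_tendsto_apply he hsep isEmptyElim⟩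
  choose En hEn using fun x => Set.countable_iff_exists_subset_range.1 (hsupp x)
  -- A pair `(k, y)` approximates `z` within `1 / (k + 1)` at the first `k + 1` support
  -- coordinates of `z` and of all earlier terms, so the terms converge in every coordinate.
  let close : ℕ → T → T → Prop := fun k x y =>
    ∀ j ≤ k, |e (En x j) y - e (En x j) z| < 1 / (k + 1)
  obtain ⟨f, hfA, hfr⟩ := exists_seq_of_forall_finset_exists
    (fun q : ℕ × T => q.2 ∈ A ∧ close q.1 z q.2) (fun q q' => q.1 < q'.1 ∧ close q'.1 q.2 q'.2)
    (by
      intro s _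
      set k := s.sup Prod.fst + 1
      obtain ⟨y, hyA, hy⟩ := exists_mem_forall_abs_sub_lt_of_mem_closure he hz
        ((insert z (s.image Prod.snd)).biUnion fun x => (Finset.range (k + 1)).image (En x))
        (Nat.one_div_pos_of_nat (n := k))
      refine ⟨(k, y), ⟨hyA, fun j hj => hy _ ?_⟩, fun q hq => ⟨?_, fun j hj => hy _ ?_⟩⟩
      · simp only [Finset.mem_biUnion, Finset.mem_insert, Finset.mem_image, Finset.mem_range]
        exact ⟨z, Or.inl rfl, j, by omega, rfl⟩
      · exact Nat.lt_succ_of_le (Finset.le_sup (f := Prod.fst) hq)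
      · simp only [Finset.mem_biUnion, Finset.mem_insert, Finset.mem_image, Finset.mem_range]
        exact ⟨q.2, Or.inr ⟨q, hq, rfl⟩, j, by omega, rfl⟩)
  have hk : Tendsto (fun n => (f n).1) atTop atTop :=
    (strictMono_nat_of_lt_succ fun n => (hfr n (n + 1) n.lt_succ_self).1).tendsto_atTop
  refine ⟨fun n => (f n).2, fun n => (hfA n).1, tendsto_of_forall_tendsto_apply he hsep fun i => ?_⟩
  have hev : ∀ᶠ n in atTop, |e i (f n).2 - e i z| < 1 / ((f n).1 + 1) := by
    by_cases hiz : e i z ≠ 0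
    · obtain ⟨j, rfl⟩ := hEn z hiz
      filter_upwards [hk.eventually_ge_atTop j] with n hn using (hfA n).2 j hn
    by_cases hia : ∃ m, e i (f m).2 ≠ 0
    · obtain ⟨m, hm⟩ := hia
      obtain ⟨j, rfl⟩ := hEn _ hm
      filter_upwards [hk.eventually_ge_atTop j, eventually_gt_atTop m] with n hn hmn
        using (hfr m n hmn).2 j hn
    simp only [ne_eq, not_not, not_exists] at hiz hia
    exact Eventually.of_forall fun n => by simp only [hiz, hia n, sub_self, abs_zero]; positivity
  have hbound : Tendsto (fun n => 1 / ((f n).1 + 1 : ℝ)) atTop (𝓝 0) :=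
    tendsto_one_div_add_atTop_nhds_zero_nat.comp hk
  rw [tendsto_iff_norm_sub_tendsto_zero]
  exact squeeze_zero' (Eventually.of_forall fun n => norm_nonneg _)
    (hev.mono fun n hn => hn.le) hbound

end FrechetUrysohn

section WellOrderTopology

variable {α : Type*} [LinearOrder α] [TopologicalSpace α] [OrderTopology α] [SuccOrder α]

lemma isClopen_Iic_of_not_isMax {b : α} (hb : ¬ IsMax b) : IsClopen (Iic b) :=
  ⟨isClosed_Iic, Order.Iio_succ_of_not_isMax hb ▸ isOpen_Iio⟩

/-- The least element of a nonempty open set is isolated. -/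
lemma dense_setOf_isOpen_singleton [WellFoundedLT α] : Dense {a : α | IsOpen ({a} : Set α)} := by
  refine dense_iff_inter_open.2 fun U hU hne => ?_
  obtain ⟨m, hmU, hmin⟩ := wellFounded_lt.has_min U hne
  have hIic : IsOpen (Iic m) := by
    by_cases hm : IsMax m
    · convert isOpen_univ
      exact eq_univ_of_forall fun b => (le_total b m).elim id (@hm b)
    · exact (isClopen_Iic_of_not_isMax hm).isOpen
  refine ⟨m, hmU, show IsOpen {m} from ?_⟩
  convert hU.inter hIic using 1
  ext b
  exact ⟨by rintro rfl; exact ⟨hmU, le_rfl⟩, fun hb => le_antisymm hb.2 (not_lt.1 (hmin b hb.1))⟩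

lemma tendsto_succ_atTop_nhds_top [OrderTop α] :
    Tendsto (fun c : Iio (⊤ : α) => Order.succ (c : α)) atTop (𝓝 ⊤) := by
  refine tendsto_atTop_isLUB (fun c d h => Order.succ_le_succ h) ⟨fun _ _ => le_top, fun b hb => ?_⟩
  by_contra hb'
  have hbt : b < ⊤ := not_le.1 hb'
  exact not_isMax_of_lt hbt (Order.succ_le_iff_isMax.1 (hb ⟨⟨b, hbt⟩, rfl⟩))

end WellOrderTopology

abbrev IsolatedPoint (K : Type*) [TopologicalSpace K] := {p : K // IsOpen ({p} : Set K)}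

section IsolatedPoints

variable {K : Type*} [TopologicalSpace K]

open ContinuousMap

noncomputable def isolatedEvalClosure (t : K) : Submodule ℝ (StrongDual ℝ C(K, ℝ)) :=
  (Submodule.span ℝ (evalCLM ℝ '' insert t {p | IsOpen ({p} : Set K)})).topologicalClosure

lemma evalCLM_mem_isolatedEvalClosure {t p : K} (hp : p = t ∨ IsOpen ({p} : Set K)) :
    evalCLM ℝ p ∈ isolatedEvalClosure t :=
  Submodule.le_topologicalClosure _ (Submodule.subset_span ⟨p, hp, rfl⟩)

variable [T1Space K]

noncomputable def isolatedIndicator (p : IsolatedPoint K) : C(K, ℝ) :=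
  LocallyConstant.charFn ℝ (show IsClopen {p.1} from ⟨isClosed_singleton, p.2⟩)

lemma isolatedIndicator_apply (p : IsolatedPoint K) (x : K) :
    isolatedIndicator p x = Set.indicator {p.1} 1 x := by
  rw [isolatedIndicator, LocallyConstant.coe_continuousMap, LocallyConstant.coe_charFn]

lemma isolatedIndicator_apply_self (p : IsolatedPoint K) : isolatedIndicator p p = 1 := by
  simp [isolatedIndicator_apply]

lemma isolatedIndicator_apply_of_ne (p : IsolatedPoint K) {x : K} (hx : x ≠ p) :
    isolatedIndicator p x = 0 := by
  simp [isolatedIndicator_apply, hx]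

lemma isolatedIndicator_apply_of_not_isOpen (p : IsolatedPoint K) {x : K}
    (hx : ¬ IsOpen ({x} : Set K)) : isolatedIndicator p x = 0 :=
  isolatedIndicator_apply_of_ne p fun h => hx (h ▸ p.2)

variable [CompactSpace K]

lemma norm_sum_smul_isolatedIndicator_le (s : Finset (IsolatedPoint K))
    {c : IsolatedPoint K → ℝ} (hc : ∀ p, |c p| ≤ 1) :
    ‖∑ p ∈ s, c p • isolatedIndicator p‖ ≤ 1 := by
  refine (ContinuousMap.norm_le _ zero_le_one).2 fun x => ?_
  simp only [ContinuousMap.sum_apply, ContinuousMap.smul_apply, smul_eq_mul, Real.norm_eq_abs]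
  by_cases hx : IsOpen ({x} : Set K)
  · have hzero : ∀ p : IsolatedPoint K, p ≠ ⟨x, hx⟩ → c p * isolatedIndicator p x = 0 :=
      fun p hp => by rw [isolatedIndicator_apply_of_ne p fun h => hp (Subtype.ext h.symm), mul_zero]
    by_cases hxs : ⟨x, hx⟩ ∈ s
    · rw [Finset.sum_eq_single_of_mem _ hxs fun p _ => hzero p, isolatedIndicator_apply_self,
        mul_one]
      exact hc _
    · rw [Finset.sum_eq_zero fun p hp => hzero p (ne_of_mem_of_not_mem hp hxs), abs_zero]
      exact zero_le_one
  · simp [isolatedIndicator_apply_of_not_isOpen _ hx]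

lemma sum_abs_apply_isolatedIndicator_le (μ : StrongDual ℝ C(K, ℝ))
    (s : Finset (IsolatedPoint K)) : ∑ p ∈ s, |μ (isolatedIndicator p)| ≤ ‖μ‖ := by
  set c : IsolatedPoint K → ℝ := fun p => SignType.sign (μ (isolatedIndicator p))
  have hc : ∀ p, |c p| ≤ 1 := fun p => by
    rcases SignType.trichotomy (SignType.sign (μ (isolatedIndicator p))) with h | h | h <;>
      simp [c, h]
  calc ∑ p ∈ s, |μ (isolatedIndicator p)| = μ (∑ p ∈ s, c p • isolatedIndicator p) := by
        simp [c, map_sum, sign_mul_self]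
    _ ≤ ‖μ‖ * ‖∑ p ∈ s, c p • isolatedIndicator p‖ := (le_abs_self _).trans (μ.le_opNorm _)
    _ ≤ ‖μ‖ := mul_le_of_le_one_right (norm_nonneg μ) (norm_sum_smul_isolatedIndicator_le s hc)

lemma summable_abs_apply_isolatedIndicator (μ : StrongDual ℝ C(K, ℝ)) :
    Summable fun p : IsolatedPoint K => |μ (isolatedIndicator p)| :=
  summable_of_sum_le (fun _ => abs_nonneg _) (sum_abs_apply_isolatedIndicator_le μ)

lemma norm_apply_isolatedIndicator_mul_le (μ : StrongDual ℝ C(K, ℝ)) (g : C(K, ℝ))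
    (p : IsolatedPoint K) : ‖μ (isolatedIndicator p) * g p‖ ≤ |μ (isolatedIndicator p)| * ‖g‖ := by
  rw [norm_mul, Real.norm_eq_abs]
  exact mul_le_mul_of_nonneg_left (g.norm_coe_le_norm p) (abs_nonneg _)

lemma summable_apply_isolatedIndicator_mul (μ : StrongDual ℝ C(K, ℝ)) (g : C(K, ℝ)) :
    Summable fun p : IsolatedPoint K => μ (isolatedIndicator p) * g p :=
  ((summable_abs_apply_isolatedIndicator μ).mul_right ‖g‖).of_norm_bounded
    (norm_apply_isolatedIndicator_mul_le μ g)

lemma countable_support_apply_isolatedIndicator (μ : StrongDual ℝ C(K, ℝ)) :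
    (Function.support fun p : IsolatedPoint K => μ (isolatedIndicator p)).Countable := by
  simpa using (summable_apply_isolatedIndicator_mul μ 1).countable_support

lemma norm_tsum_apply_isolatedIndicator_mul_le (μ : StrongDual ℝ C(K, ℝ)) (g : C(K, ℝ)) :
    ‖∑' p : IsolatedPoint K, μ (isolatedIndicator p) * g p‖ ≤ ‖g‖ * ‖μ‖ := by
  have hsum := (summable_abs_apply_isolatedIndicator μ).mul_right ‖g‖
  calc ‖∑' p : IsolatedPoint K, μ (isolatedIndicator p) * g p‖
      ≤ ∑' p : IsolatedPoint K, |μ (isolatedIndicator p)| * ‖g‖ :=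
        tsum_of_norm_bounded hsum.hasSum (norm_apply_isolatedIndicator_mul_le μ g)
    _ = (∑' p : IsolatedPoint K, |μ (isolatedIndicator p)|) * ‖g‖ := tsum_mul_right
    _ ≤ ‖μ‖ * ‖g‖ := by
        gcongr
        exact Real.tsum_le_of_sum_le (fun _ => abs_nonneg _) (sum_abs_apply_isolatedIndicator_le μ)
    _ = ‖g‖ * ‖μ‖ := mul_comm _ _

noncomputable def atomicPart (g : C(K, ℝ)) : StrongDual ℝ C(K, ℝ) →L[ℝ] ℝ :=
  LinearMap.mkContinuous
    { toFun := fun μ => ∑' p : IsolatedPoint K, μ (isolatedIndicator p) * g p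
      map_add' := fun μ ν => by
        simp only [_root_.add_apply, add_mul]
        exact (summable_apply_isolatedIndicator_mul μ g).tsum_add
          (summable_apply_isolatedIndicator_mul ν g)
      map_smul' := fun a μ => by
        simp only [_root_.smul_apply, smul_eq_mul, mul_assoc, RingHom.id_apply]
        exact tsum_mul_left }
    ‖g‖ (norm_tsum_apply_isolatedIndicator_mul_le · g)

lemma atomicPart_apply (g : C(K, ℝ)) (μ : StrongDual ℝ C(K, ℝ)) :
    atomicPart g μ = ∑' p : IsolatedPoint K, μ (isolatedIndicator p) * g p := rfl

lemma atomicPart_evalCLM_of_isOpen (g : C(K, ℝ)) {q : K} (hq : IsOpen ({q} : Set K)) :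
    atomicPart g (evalCLM ℝ q) = g q := by
  rw [atomicPart_apply, tsum_eq_single ⟨q, hq⟩]
  · rw [evalCLM_apply, isolatedIndicator_apply_self, one_mul]
  · intro p hp
    rw [evalCLM_apply, isolatedIndicator_apply_of_ne p fun h => hp (Subtype.ext h.symm), zero_mul]

lemma atomicPart_evalCLM_of_not_isOpen (g : C(K, ℝ)) {t : K} (ht : ¬ IsOpen ({t} : Set K)) :
    atomicPart g (evalCLM ℝ t) = 0 := by
  simp [atomicPart_apply, isolatedIndicator_apply_of_not_isOpen _ ht]

theorem apply_eq_atomicPart_add {t : K} (ht : ¬ IsOpen ({t} : Set K))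
    {μ : StrongDual ℝ C(K, ℝ)} (hμ : μ ∈ isolatedEvalClosure t) (g : C(K, ℝ)) :
    μ g = atomicPart g μ + (μ 1 - atomicPart 1 μ) * g t := by
  let Φ : StrongDual ℝ C(K, ℝ) →L[ℝ] ℝ :=
    atomicPart g + g t • (ContinuousLinearMap.apply ℝ ℝ (1 : C(K, ℝ)) - atomicPart 1)
  have hgen : Set.EqOn (ContinuousLinearMap.apply ℝ ℝ g) Φ
      (evalCLM ℝ '' insert t {p | IsOpen ({p} : Set K)}) := by
    rintro _ ⟨q, rfl | hq, rfl⟩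
    · simp [Φ, atomicPart_evalCLM_of_not_isOpen _ ht]
    · simp [Φ, atomicPart_evalCLM_of_isOpen _ hq]
  have hμg := ContinuousLinearMap.eqOn_closure_span hgen hμ
  rw [ContinuousLinearMap.apply_apply] at hμg
  rw [hμg]
  simp only [Φ, _root_.add_apply, _root_.smul_apply, _root_.sub_apply,
    ContinuousLinearMap.apply_apply, smul_eq_mul]
  ring

theorem eq_of_apply_isolatedIndicator_eq {t : K} (ht : ¬ IsOpen ({t} : Set K))
    {μ ν : StrongDual ℝ C(K, ℝ)} (hμ : μ ∈ isolatedEvalClosure t) (hν : ν ∈ isolatedEvalClosure t)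
    (h : ∀ p, μ (isolatedIndicator p) = ν (isolatedIndicator p)) (h1 : μ 1 = ν 1) : μ = ν := by
  have hatoms : ∀ g, atomicPart g μ = atomicPart g ν := fun g => by
    simp only [atomicPart_apply, h]
  ext g
  rw [apply_eq_atomicPart_add ht hμ, apply_eq_atomicPart_add ht hν, hatoms, hatoms, h1]

theorem atomicPart_one_eq_apply_charFn {t : K} (ht : ¬ IsOpen ({t} : Set K))
    {μ : StrongDual ℝ C(K, ℝ)} (hμ : μ ∈ isolatedEvalClosure t) {U : Set K} (hU : IsClopen U)
    (htU : t ∉ U) (hsupp : ∀ p, μ (isolatedIndicator p) ≠ 0 → p.1 ∈ U) :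
    atomicPart 1 μ = μ (LocallyConstant.charFn ℝ hU) := by
  have hχ : ∀ x, (LocallyConstant.charFn ℝ hU : C(K, ℝ)) x = U.indicator 1 x := fun x => by
    rw [LocallyConstant.coe_continuousMap, LocallyConstant.coe_charFn]
  rw [apply_eq_atomicPart_add ht hμ, hχ, Set.indicator_of_notMem htU, mul_zero, add_zero,
    atomicPart_apply, atomicPart_apply]
  refine tsum_congr fun p => ?_
  by_cases hp : μ (isolatedIndicator p) = 0
  · rw [hp, zero_mul, zero_mul]
  · rw [hχ, Set.indicator_of_mem (hsupp p hp)]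
    rfl

theorem frechetUrysohnSpace_of_subset_isolatedEvalClosure {t : K} (ht : ¬ IsOpen ({t} : Set K))
    {C : Set (WeakDual ℝ C(K, ℝ))} (hC : IsCompact C)
    (hCt : ∀ μ ∈ C, WeakDual.toStrongDual μ ∈ isolatedEvalClosure t) : FrechetUrysohnSpace C := by
  have := isCompact_iff_compactSpace.1 hC
  refine frechetUrysohnSpace_of_countable_support
    (e := fun (i : Option (IsolatedPoint K)) (μ : C) => μ.1 (i.elim 1 isolatedIndicator))
    (fun i => (WeakDual.eval_continuous _).comp continuous_subtype_val) ?_ fun μ => ?_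
  · intro μ ν h
    refine Subtype.ext (WeakDual.toStrongDual.injective ?_)
    exact eq_of_apply_isolatedIndicator_eq ht (hCt μ μ.2) (hCt ν ν.2)
      (fun p => congr_fun h (some p)) (congr_fun h none)
  · refine (((countable_support_apply_isolatedIndicator
      (WeakDual.toStrongDual μ.1)).image some).insert none).mono ?_
    rintro (_ | p) hp
    · exact mem_insert _ _
    · exact mem_insert_of_mem _ ⟨p, hp, rfl⟩

end IsolatedPoints

section Norming

variable {K : Type*} [TopologicalSpace K] [CompactSpace K]

open ContinuousMap

lemma norm_evalCLM_le (p : K) : ‖(evalCLM ℝ p : StrongDual ℝ C(K, ℝ))‖ ≤ 1 :=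
  ContinuousLinearMap.opNorm_le_bound _ zero_le_one fun x => by
    simpa using x.norm_coe_le_norm p

theorem isNorming_of_dense {D : Set K} (hD : Dense D) {Y : Submodule ℝ (WeakDual ℝ C(K, ℝ))}
    (hY : ∀ p ∈ D, StrongDual.toWeakDual (evalCLM ℝ p) ∈ Y) : IsNorming C(K, ℝ) Y := by
  refine ⟨1, one_pos, fun x => ?_⟩
  set R := {r : ℝ | ∃ y ∈ Y, dnorm C(K, ℝ) y ≤ 1 ∧ r = y x}
  have hbdd : BddAbove R := by
    refine ⟨‖x‖, ?_⟩
    rintro _ ⟨y, -, hy, rfl⟩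
    calc y x ≤ ‖WeakDual.toStrongDual y x‖ := le_abs_self _
      _ ≤ ‖WeakDual.toStrongDual y‖ * ‖x‖ := (WeakDual.toStrongDual y).le_opNorm x
      _ ≤ ‖x‖ := mul_le_of_le_one_left (norm_nonneg x) hy
  have hmem : ∀ p ∈ D, ‖x p‖ ∈ R := by
    intro p hp
    have hδ : dnorm C(K, ℝ) (StrongDual.toWeakDual (evalCLM ℝ p)) ≤ 1 := norm_evalCLM_le p
    rcases le_or_gt 0 (x p) with hx | hx
    · exact ⟨_, hY p hp, hδ, by rw [Real.norm_eq_abs, abs_of_nonneg hx]; rfl⟩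
    · refine ⟨_, Y.neg_mem (hY p hp), ?_, by rw [Real.norm_eq_abs, abs_of_neg hx]; rfl⟩
      simpa [dnorm] using hδ
  have hR : 0 ≤ sSup R := le_csSup hbdd ⟨0, Y.zero_mem, by simp [dnorm], rfl⟩
  have hle : closure D ⊆ {p | ‖x p‖ ≤ sSup R} :=
    closure_minimal (fun p hp => le_csSup hbdd (hmem p hp))
      (isClosed_le (by fun_prop) continuous_const)
  rw [one_mul, ContinuousMap.norm_le _ hR]
  exact fun p => hle (hD.closure_eq ▸ mem_univ p)

end Norming

universe u

abbrev IicOmegaOne : Type (u + 1) := ↥(Set.Iic (Cardinal.aleph.{u} 1).ord)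

namespace IicOmegaOne

open ContinuousMap

lemma succ_lt_top {c : IicOmegaOne.{u}} (hc : c < ⊤) : Order.succ c < ⊤ := by
  have := (Cardinal.isSuccLimit_ord (Cardinal.aleph0_le_aleph 1)).succ_lt (show c.1 < _ from hc)
  rwa [← Set.Iic.coe_succ_of_not_isMax (not_isMax_of_lt hc)] at this

instance : Nonempty (Iio (⊤ : IicOmegaOne.{u})) :=
  ⟨⟨⊥, (Cardinal.isSuccLimit_ord (Cardinal.aleph0_le_aleph 1)).bot_lt⟩⟩

lemma isOpen_singleton_succ {c : IicOmegaOne.{u}} (hc : c < ⊤) :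
    IsOpen ({Order.succ c} : Set IicOmegaOne) :=
  SuccOrder.isOpen_singleton_of_not_isSuccPrelimit fun h => not_isMax_of_lt hc h.isMax

lemma not_isOpen_singleton_top : ¬ IsOpen ({⊤} : Set IicOmegaOne.{u}) := fun h => by
  obtain ⟨c, hc⟩ := (tendsto_succ_atTop_nhds_top.eventually_mem (h.mem_nhds rfl)).exists
  exact (succ_lt_top c.2).ne hc

lemma lt_top_of_isOpen_singleton {p : IicOmegaOne.{u}} (hp : IsOpen ({p} : Set IicOmegaOne)) :
    p < ⊤ :=
  lt_top_iff_ne_top.2 fun h => not_isOpen_singleton_top (h ▸ hp)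

lemma exists_lt_top_forall_le_of_countable {S : Set IicOmegaOne.{u}} (hS : S.Countable)
    (hlt : ∀ p ∈ S, p < ⊤) : ∃ β < ⊤, ∀ p ∈ S, p ≤ β := by
  have := hS.to_subtype
  have hsup := Ordinal.iSup_lt_omega_one (f := fun p : S => (p : IicOmegaOne).1) fun p => by
    rw [← Cardinal.ord_aleph]
    exact hlt p p.2
  rw [← Cardinal.ord_aleph] at hsup
  exact ⟨⟨_, hsup.le⟩, hsup, fun p hp => le_ciSup Ordinal.bddAbove_of_small (⟨p, hp⟩ : S)⟩

noncomputable def dualY : Submodule ℝ (WeakDual ℝ C(IicOmegaOne.{u}, ℝ)) :=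
  (isolatedEvalClosure ⊤).comap WeakDual.toStrongDual.toLinearMap

/-- On `dualY` this is `μ ↦ μ [0, ω₁)`, the mass off the point `ω₁`. -/
noncomputable def atomicMass : dualY.{u} →ₗ[ℝ] ℝ :=
  (atomicPart 1).toLinearMap ∘ₗ WeakDual.toStrongDual.toLinearMap ∘ₗ dualY.subtype

lemma evalCLM_mem_dualY {p : IicOmegaOne.{u}} (hp : p = ⊤ ∨ IsOpen ({p} : Set IicOmegaOne)) :
    StrongDual.toWeakDual (evalCLM ℝ p) ∈ dualY :=
  evalCLM_mem_isolatedEvalClosure hp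

theorem isNorming_dualY : IsNorming _ dualY.{u} :=
  isNorming_of_dense dense_setOf_isOpen_singleton fun _ hp => evalCLM_mem_dualY (Or.inr hp)

theorem normClosed_dualY : NormClosed _ dualY.{u} := by
  show IsClosed (WeakDual.toStrongDual.toEquiv '' (WeakDual.toStrongDual.toEquiv ⁻¹'
    (isolatedEvalClosure (⊤ : IicOmegaOne.{u}) : Set (StrongDual ℝ C(IicOmegaOne, ℝ)))))
  rw [Equiv.image_preimage]
  exact Submodule.isClosed_topologicalClosure _

theorem tendsto_atomicPart_one {v : ℕ → WeakDual ℝ C(IicOmegaOne.{u}, ℝ)} (hv : ∀ n, v n ∈ dualY)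
    {w : WeakDual ℝ C(IicOmegaOne.{u}, ℝ)} (hw : w ∈ dualY) (h : Tendsto v atTop (𝓝 w)) :
    Tendsto (fun n => atomicPart 1 (WeakDual.toStrongDual (v n))) atTop
      (𝓝 (atomicPart 1 (WeakDual.toStrongDual w))) := by
  let S : Set (IsolatedPoint IicOmegaOne) := ⋃ μ ∈ insert w (range v),
    Function.support fun p => WeakDual.toStrongDual μ (isolatedIndicator p)
  have hS : S.Countable := ((countable_range v).insert w).biUnion fun μ _ =>
    countable_support_apply_isolatedIndicator _
  obtain ⟨β, hβ, hle⟩ := exists_lt_top_forall_le_of_countable (hS.image Subtype.val) <| by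
    rintro _ ⟨p, -, rfl⟩
    exact lt_top_of_isOpen_singleton p.2
  have hU := isClopen_Iic_of_not_isMax (not_isMax_of_lt hβ)
  have key : ∀ μ ∈ insert w (range v), atomicPart 1 (WeakDual.toStrongDual μ) =
      μ (LocallyConstant.charFn ℝ hU) := by
    intro μ hμ
    have hμY : μ ∈ dualY := by
      rcases hμ with rfl | ⟨n, rfl⟩
      exacts [hw, hv n]
    exact atomicPart_one_eq_apply_charFn not_isOpen_singleton_top hμY hU (notMem_Iic.2 hβ)
      fun p hp => hle _ ⟨p, mem_biUnion hμ hp, rfl⟩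
  rw [key w (mem_insert _ _)]
  simp_rw [key _ (mem_insert_of_mem _ (mem_range_self _))]
  exact ((WeakDual.eval_continuous _).tendsto w).comp h

theorem grothendieckCond_atomicMass : GrothendieckCond _ atomicMass.{u} := by
  intro C hCY _ _ hC
  have := frechetUrysohnSpace_of_subset_isolatedEvalClosure not_isOpen_singleton_top hC hCY
  have hcont : Continuous fun μ : C => atomicPart 1 (WeakDual.toStrongDual μ.1) :=
    SeqContinuous.continuous fun {v w} h => tendsto_atomicPart_one (fun n => hCY (v n).2)
      (hCY w.2) ((continuous_subtype_val.tendsto w).comp h)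
  have hincl : Continuous fun y : (Subtype.val ⁻¹' C : Set dualY) => (⟨y.1.1, y.2⟩ : C) :=
    (continuous_subtype_val.comp continuous_subtype_val).subtype_mk _
  rw [continuousOn_iff_continuous_domRestrict]
  exact hcont.comp hincl

theorem not_continuous_atomicMass : ¬ Continuous atomicMass.{u} := by
  intro hcont
  let δ : IicOmegaOne.{u} → WeakDual ℝ C(IicOmegaOne, ℝ) := fun p =>
    StrongDual.toWeakDual (evalCLM ℝ p)
  have hlim : Tendsto (fun c : Iio (⊤ : IicOmegaOne) =>
      (⟨δ (Order.succ c), evalCLM_mem_dualY (Or.inr (isOpen_singleton_succ c.2))⟩ : dualY))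
      atTop (𝓝 ⟨δ ⊤, evalCLM_mem_dualY (Or.inl rfl)⟩) := by
    refine tendsto_subtype_rng.2 (tendsto_iff_forall_eval_tendsto_topDualPairing.2 fun x => ?_)
    exact (x.continuous.tendsto ⊤).comp tendsto_succ_atTop_nhds_top
  have h1 := (hcont.tendsto _).comp hlim
  have hδ : ∀ p, WeakDual.toStrongDual (δ p) = evalCLM ℝ p := fun _ => rfl
  simp only [Function.comp_def, atomicMass, LinearMap.coe_comp, Function.comp_apply,
    Submodule.coe_subtype, ContinuousLinearMap.coe_coe, LinearEquiv.coe_coe, hδ,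
    atomicPart_evalCLM_of_not_isOpen _ not_isOpen_singleton_top] at h1
  rw [tendsto_congr fun c => atomicPart_evalCLM_of_isOpen 1 (isOpen_singleton_succ c.2)] at h1
  exact one_ne_zero (tendsto_const_nhds_iff.1 h1)

end IicOmegaOne

open IicOmegaOne

/-- The space `C([0, ω₁])` of continuous functions on the compact ordinal
interval `[0, ω₁]` is not fully Mackey complete: there are a norming and norm-closed subspace
`Y` of its dual and a linear functional on `Y` which is not weak-star continuous although its
restriction to every absolutely convex weak-star compact subset of `Y` is weak-star
continuous. -/
theorem statement12 :
    ¬ FullyMackeyComplete C(↥(Set.Iic (Cardinal.aleph 1).ord), ℝ) ∧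
    ∃ Y : Submodule ℝ (WeakDual ℝ C(↥(Set.Iic (Cardinal.aleph 1).ord), ℝ)),
      IsNorming C(↥(Set.Iic (Cardinal.aleph 1).ord), ℝ) Y ∧
      NormClosed C(↥(Set.Iic (Cardinal.aleph 1).ord), ℝ) Y ∧
      ∃ f : Y →ₗ[ℝ] ℝ,
        GrothendieckCond C(↥(Set.Iic (Cardinal.aleph 1).ord), ℝ) f ∧ ¬ Continuous f :=
  ⟨fun h => not_continuous_atomicMass
      (h _ isNorming_dualY normClosed_dualY _ grothendieckCond_atomicMass),
    dualY, isNorming_dualY, normClosed_dualY, atomicMass, grothendieckCond_atomicMass,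
    not_continuous_atomicMass⟩
end

section
/- Let X be a real Banach space which is w*-sequentially dense in its bidual, i.e., every x** ∈ X** is the σ(X**,X*)-limit of a sequence contained in the canonical image of X. Then (X**, σ(X**,X*)) has the Mazur property: every linear functional F : X** → ℝ which is σ(X**,X*)-sequentially continuous is σ(X**,X*)-continuous. -/
open Filter Topology

/-!
Sequential continuity of `F` on the bidual makes `f := F ∘ ι` sequentially continuous, hence
continuous, on the normed space `X`, so `f ∈ X*`. The two functionals `F` and evaluation at `f`
agree on `ι(X)`, both are weak-star sequentially continuous, and `ι(X)` is weak-star sequentially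
dense, so they agree everywhere; evaluation at `f` is weak-star continuous.
-/

namespace NormedSpace

variable {𝕜 X : Type*} [NontriviallyNormedField 𝕜] [SeminormedAddCommGroup X] [NormedSpace 𝕜 X]

noncomputable def inclusionInWeakDoubleDual : X →L[𝕜] WeakDual 𝕜 (StrongDual 𝕜 X) :=
  Dual.continuousLinearMapToWeakDual.comp (inclusionInDoubleDual 𝕜 X)

noncomputable def restrictOfSeqContinuous (F : WeakDual 𝕜 (StrongDual 𝕜 X) →ₗ[𝕜] 𝕜)
    (hF : SeqContinuous F) : StrongDual 𝕜 X where
  toLinearMap := F ∘ₗ inclusionInWeakDoubleDual.toLinearMap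
  cont := SeqContinuous.continuous fun _ x hu =>
    hF ((inclusionInWeakDoubleDual.continuous.tendsto x).comp hu)

theorem eq_eval_restrictOfSeqContinuous (F : WeakDual 𝕜 (StrongDual 𝕜 X) →ₗ[𝕜] 𝕜)
    (hF : SeqContinuous F)
    (hdense : ∀ z : WeakDual 𝕜 (StrongDual 𝕜 X), ∃ u : ℕ → X,
      Tendsto (fun n => inclusionInWeakDoubleDual (u n)) atTop (𝓝 z))
    (z : WeakDual 𝕜 (StrongDual 𝕜 X)) :
    F z = z (restrictOfSeqContinuous F hF) := by
  obtain ⟨u, hu⟩ := hdense z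
  have hF_lim := hF hu
  have heval_lim := (WeakDual.eval_continuous (restrictOfSeqContinuous F hF)).tendsto z |>.comp hu
  -- both sequences are `n ↦ f (u n)`, definitionally
  exact tendsto_nhds_unique hF_lim heval_lim

theorem continuous_of_seqContinuous_of_seqDense (F : WeakDual 𝕜 (StrongDual 𝕜 X) →ₗ[𝕜] 𝕜)
    (hF : SeqContinuous F)
    (hdense : ∀ z : WeakDual 𝕜 (StrongDual 𝕜 X), ∃ u : ℕ → X,
      Tendsto (fun n => inclusionInWeakDoubleDual (u n)) atTop (𝓝 z)) :
    Continuous F := by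
  have hF_eq : ⇑F = fun z => z (restrictOfSeqContinuous F hF) :=
    funext (eq_eval_restrictOfSeqContinuous F hF hdense)
  rw [hF_eq]
  exact WeakDual.eval_continuous _

end NormedSpace

theorem statement15_general (X : Type*) [NormedAddCommGroup X] [NormedSpace ℝ X]
    (h : ∀ F : WeakDual ℝ (StrongDual ℝ X), ∃ u : ℕ → X,
      Tendsto (fun n => StrongDual.toWeakDual
        (NormedSpace.inclusionInDoubleDual ℝ X (u n))) atTop (𝓝 F)) :
    ∀ F : WeakDual ℝ (StrongDual ℝ X) →ₗ[ℝ] ℝ,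
      (∀ (u : ℕ → WeakDual ℝ (StrongDual ℝ X))
        (z : WeakDual ℝ (StrongDual ℝ X)),
        Tendsto u atTop (𝓝 z) → Tendsto (fun n => F (u n)) atTop (𝓝 (F z))) →
      Continuous F :=
  fun F hF => NormedSpace.continuous_of_seqContinuous_of_seqDense F (fun _ _ hu => hF _ _ hu) h

/-- If `X` is weak-star sequentially dense in its bidual, then
`(X**, σ(X**,X*))` has the Mazur property: every `σ(X**,X*)`-sequentially continuous linear
functional on `X**` is `σ(X**,X*)`-continuous. -/
theorem statement15 (X : Type*) [NormedAddCommGroup X] [NormedSpace ℝ X] [CompleteSpace X]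
    (h : ∀ F : WeakDual ℝ (StrongDual ℝ X), ∃ u : ℕ → X,
      Tendsto (fun n => StrongDual.toWeakDual
        (NormedSpace.inclusionInDoubleDual ℝ X (u n))) atTop (𝓝 F)) :
    ∀ F : WeakDual ℝ (StrongDual ℝ X) →ₗ[ℝ] ℝ,
      (∀ (u : ℕ → WeakDual ℝ (StrongDual ℝ X))
        (z : WeakDual ℝ (StrongDual ℝ X)),
        Tendsto u atTop (𝓝 z) → Tendsto (fun n => F (u n)) atTop (𝓝 (F z))) →
      Continuous F :=
  statement15_general X h
end
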